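/- arXiv:math/0702894 — 3 statements merged into one kernel-verified Lean document; each statement's English description precedes it below -/
import Mathlib

section
/- Let p be prime and Γ a finite p-group. Any homomorphism f: M → N of projective ℤ/p[Γ]-modules such that the induced map f ⊗ id : M ⊗_{ℤ/p[Γ]} ℤ/p → N ⊗_{ℤ/p[Γ]} ℤ/p is injective is itself injective. -/
/-!
Every finite `ℤ/p[Γ]`-module `V ≠ 0` has a nonzero `Γ`-fixed vector, since `|V|` is a power
of `p`; so `Γ` acts trivially on simple modules, the augmentation ideal `I` lies in the
Jacobson radical of the finite ring `ℤ/p[Γ]`, and is therefore nilpotent.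
On coinvariants `ℤ/p[Γ]` acts through `ℤ/p`, so the injective map `f ⊗ id` has a
`ℤ/p[Γ]`-linear left inverse. Lifting it along `M → M/IM` by projectivity of `N` gives
`h : N → M` with `h ∘ f ≡ id` modulo `IM`, and an endomorphism congruent to the identity
modulo a nilpotent ideal is injective.
-/

/-- The augmentation homomorphism `ℤ/p[Γ] → ℤ/p`. -/
noncomputable def aug (p : ℕ) (Γ : Type*) [Group Γ] :
    MonoidAlgebra (ZMod p) Γ →ₐ[ZMod p] ZMod p :=
  MonoidAlgebra.lift (ZMod p) (ZMod p) Γ 1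

/-- The augmentation ideal of `ℤ/p[Γ]`. -/
noncomputable def augIdeal (p : ℕ) (Γ : Type*) [Group Γ] :
    Ideal (MonoidAlgebra (ZMod p) Γ) :=
  RingHom.ker (aug p Γ)

/-- The submodule `I·M` of a `ℤ/p[Γ]`-module `M`, where `I` is the augmentation ideal;
the quotient `M ⧸ I·M` is `M ⊗_{ℤ/p[Γ]} ℤ/p`, the coinvariants of `M`. -/
noncomputable def coinvSub (p : ℕ) (Γ : Type*) [Group Γ] (M : Type*) [AddCommGroup M]
    [Module (MonoidAlgebra (ZMod p) Γ) M] : Submodule (MonoidAlgebra (ZMod p) Γ) M :=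
  augIdeal p Γ • (⊤ : Submodule (MonoidAlgebra (ZMod p) Γ) M)

/-- The map `M ⊗_{ℤ/p[Γ]} ℤ/p → N ⊗_{ℤ/p[Γ]} ℤ/p` induced by `f : M → N`. -/
noncomputable def coinvMap (p : ℕ) (Γ : Type*) [Group Γ] {M N : Type*} [AddCommGroup M]
    [Module (MonoidAlgebra (ZMod p) Γ) M] [AddCommGroup N]
    [Module (MonoidAlgebra (ZMod p) Γ) N] (f : M →ₗ[MonoidAlgebra (ZMod p) Γ] N) :
    (M ⧸ coinvSub p Γ M) →ₗ[MonoidAlgebra (ZMod p) Γ] (N ⧸ coinvSub p Γ N) :=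
  Submodule.mapQ _ _ f (by
    rw [← Submodule.map_le_iff_le_comap, coinvSub, coinvSub, Submodule.map_smul'']
    exact Submodule.smul_mono le_rfl le_top)

lemma LinearMap.injective_of_forall_sub_mem_smul_top {R M : Type*} [Ring R] [AddCommGroup M]
    [Module R M] {I : Ideal R} (hI : IsNilpotent I) (u : M →ₗ[R] M)
    (hu : ∀ x, u x - x ∈ I • (⊤ : Submodule R M)) : Function.Injective u := by
  obtain ⟨n, hn⟩ := hI
  have hstep : ∀ k, ∀ x ∈ I ^ k • (⊤ : Submodule R M),
      u x - x ∈ I ^ (k + 1) • (⊤ : Submodule R M) := by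
    intro k x hx
    have hmap : Submodule.map (u - LinearMap.id) (I ^ k • ⊤) ≤ I ^ k • I • ⊤ := by
      rw [Submodule.map_smul'']
      exact Submodule.smul_mono le_rfl (Submodule.map_le_iff_le_comap.mpr fun y _ => hu y)
    rw [Submodule.pow_succ, Submodule.mul_smul]
    exact hmap ⟨x, hx, rfl⟩
  refine (injective_iff_map_eq_zero u).mpr fun x hx => ?_
  have hmem : ∀ k, x ∈ I ^ k • (⊤ : Submodule R M) := by
    intro k
    induction k with
    | zero =>
      simp only [Submodule.pow_zero, Ideal.one_eq_top, Submodule.top_smul, Submodule.mem_top]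
    -- `u x = 0`, so `x = -(u x - x)` lies one power of `I` deeper
    | succ k ih => simpa [hx] using hstep k x ih
  simpa [hn] using hmem n

lemma LinearMap.exists_leftInverse_of_injective_of_smul_eq_algebraMap {k A V W : Type*}
    [Field k] [Ring A] [Algebra k A] [AddCommGroup V] [Module A V] [AddCommGroup W] [Module A W]
    (ε : A → k) (hV : ∀ (a : A) (v : V), a • v = algebraMap k A (ε a) • v)
    (hW : ∀ (a : A) (w : W), a • w = algebraMap k A (ε a) • w) (f : V →ₗ[A] W)
    (hf : Function.Injective f) : ∃ g : W →ₗ[A] V, g ∘ₗ f = LinearMap.id := by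
  let _ : Module k V := Module.compHom V (algebraMap k A)
  let _ : Module k W := Module.compHom W (algebraMap k A)
  have : IsScalarTower k A V := IsScalarTower.of_compHom k A V
  have : IsScalarTower k A W := IsScalarTower.of_compHom k A W
  obtain ⟨g, hg⟩ :=
    (f.restrictScalars k).exists_leftInverse_of_injective (LinearMap.ker_eq_bot.mpr hf)
  refine ⟨{ g with map_smul' := fun a w => ?_ },
    LinearMap.ext fun v => LinearMap.congr_fun hg v⟩
  rw [RingHom.id_apply, hW, hV]
  exact g.map_smul (ε a) w

open MonoidAlgebra

section Augmentation

variable {p : ℕ} {Γ : Type*} [Group Γ]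

lemma aug_of (g : Γ) : aug p Γ (of (ZMod p) Γ g) = 1 := by
  simp [aug]

lemma of_sub_one_mem_augIdeal (g : Γ) : of (ZMod p) Γ g - 1 ∈ augIdeal p Γ := by
  rw [augIdeal, RingHom.mem_ker, map_sub, aug_of, map_one, sub_self]

variable {V : Type*} [AddCommGroup V] [Module (MonoidAlgebra (ZMod p) Γ) V]

lemma smul_eq_algebraMap_aug_smul_of_fixed {v : V} (hv : ∀ g : Γ, of (ZMod p) Γ g • v = v)
    (r : MonoidAlgebra (ZMod p) Γ) :
    r • v = algebraMap (ZMod p) (MonoidAlgebra (ZMod p) Γ) (aug p Γ r) • v := by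
  induction r using MonoidAlgebra.induction_on with
  | of g => rw [hv, aug_of, map_one, one_smul]
  | add a b ha hb => rw [add_smul, ha, hb, map_add, map_add, add_smul]
  | smul c a ha => rw [Algebra.smul_def, mul_smul, ha, map_mul, AlgHom.commutes, map_mul,
      mul_smul, Algebra.algebraMap_self, RingHom.id_apply]

lemma smul_eq_zero_of_mem_augIdeal {v : V} (hv : ∀ g : Γ, of (ZMod p) Γ g • v = v)
    {r : MonoidAlgebra (ZMod p) Γ} (hr : r ∈ augIdeal p Γ) : r • v = 0 := by
  rw [smul_eq_algebraMap_aug_smul_of_fixed hv, RingHom.mem_ker.mp hr, map_zero, zero_smul]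

lemma of_smul_coinv (g : Γ) (w : V ⧸ coinvSub p Γ V) : of (ZMod p) Γ g • w = w := by
  obtain ⟨x, rfl⟩ := Submodule.Quotient.mk_surjective _ w
  have hmem :=
    Submodule.smul_mem_smul (of_sub_one_mem_augIdeal (p := p) g) (Submodule.mem_top (x := x))
  rw [sub_smul, one_smul] at hmem
  rwa [← Submodule.Quotient.mk_smul, ← sub_eq_zero, ← Submodule.Quotient.mk_sub,
    Submodule.Quotient.mk_eq_zero]

end Augmentation

section PGroup

variable {p : ℕ} [Fact p.Prime] {Γ : Type*} [Group Γ]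

lemma exists_ne_zero_fixed_of_isPGroup (hΓ : IsPGroup p Γ) (V : Type*) [AddCommGroup V]
    [Module (MonoidAlgebra (ZMod p) Γ) V] [Finite V] [Nontrivial V] :
    ∃ v : V, v ≠ 0 ∧ ∀ g : Γ, of (ZMod p) Γ g • v = v := by
  let : MulAction Γ V := MulAction.compHom V (of (ZMod p) Γ)
  have hcard : p ∣ Nat.card V := by
    obtain ⟨v, hv⟩ := exists_ne (0 : V)
    have hpv : p • v = 0 := by
      rw [← Nat.cast_smul_eq_nsmul (MonoidAlgebra (ZMod p) Γ),
        ← map_natCast (algebraMap (ZMod p) (MonoidAlgebra (ZMod p) Γ)), ZMod.natCast_self,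
        map_zero, zero_smul]
    exact addOrderOf_eq_prime hpv hv ▸ addOrderOf_dvd_natCard v
  obtain ⟨v, hv, h0v⟩ :=
    hΓ.exists_fixed_point_of_prime_dvd_card_of_fixed_point V hcard (a := 0)
      fun g => show of (ZMod p) Γ g • (0 : V) = 0 from smul_zero _
  exact ⟨v, h0v.symm, hv⟩

variable [Finite Γ]

lemma augIdeal_le_of_isMaximal (hΓ : IsPGroup p Γ) (m : Ideal (MonoidAlgebra (ZMod p) Γ))
    [hm : m.IsMaximal] : augIdeal p Γ ≤ m := by
  have : Finite (MonoidAlgebra (ZMod p) Γ) := Module.finite_of_finite (ZMod p)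
  have : Finite (MonoidAlgebra (ZMod p) Γ ⧸ m) := Finite.of_surjective _ m.mkQ_surjective
  have : Nontrivial (MonoidAlgebra (ZMod p) Γ ⧸ m) :=
    Submodule.Quotient.nontrivial_iff.mpr hm.ne_top
  have : IsSimpleModule (MonoidAlgebra (ZMod p) Γ) (MonoidAlgebra (ZMod p) Γ ⧸ m) :=
    isSimpleModule_iff_isCoatom.mpr hm.out
  obtain ⟨v, hv0, hv⟩ := exists_ne_zero_fixed_of_isPGroup hΓ (MonoidAlgebra (ZMod p) Γ ⧸ m)
  obtain ⟨s, hs⟩ := IsSimpleModule.toSpanSingleton_surjective (MonoidAlgebra (ZMod p) Γ) hv0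
    (Submodule.Quotient.mk 1)
  intro r hr
  have hr1 : r • (Submodule.Quotient.mk 1 : MonoidAlgebra (ZMod p) Γ ⧸ m) = 0 := by
    rw [← hs, LinearMap.toSpanSingleton_apply, smul_smul]
    exact smul_eq_zero_of_mem_augIdeal hv ((RingHom.ker (aug p Γ)).mul_mem_right s hr)
  rwa [← Submodule.Quotient.mk_smul, smul_eq_mul, mul_one, Submodule.Quotient.mk_eq_zero] at hr1

lemma isNilpotent_augIdeal (hΓ : IsPGroup p Γ) : IsNilpotent (augIdeal p Γ) := by
  have : IsArtinianRing (MonoidAlgebra (ZMod p) Γ) := IsArtinianRing.of_finite (ZMod p) _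
  obtain ⟨n, hn⟩ := IsArtinianRing.isNilpotent_jacobson_bot (R := MonoidAlgebra (ZMod p) Γ)
  have hle : augIdeal p Γ ≤ Ideal.jacobson ⊥ := by
    rw [Ideal.jacobson_bot, Ring.jacobson_eq_sInf_isMaximal]
    exact le_sInf fun m hm => augIdeal_le_of_isMaximal (hm := hm) hΓ m
  exact ⟨n, eq_bot_iff.mpr ((Ideal.pow_right_mono hle n).trans hn.le)⟩

end PGroup

lemma exists_leftInverse_coinvMap {p : ℕ} [Fact p.Prime] {Γ : Type*} [Group Γ] {M N : Type*}
    [AddCommGroup M] [Module (MonoidAlgebra (ZMod p) Γ) M] [AddCommGroup N]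
    [Module (MonoidAlgebra (ZMod p) Γ) N] (f : M →ₗ[MonoidAlgebra (ZMod p) Γ] N)
    (hf : Function.Injective (coinvMap p Γ f)) :
    ∃ g, g ∘ₗ coinvMap p Γ f = LinearMap.id :=
  LinearMap.exists_leftInverse_of_injective_of_smul_eq_algebraMap (aug p Γ)
    (fun a v => smul_eq_algebraMap_aug_smul_of_fixed (of_smul_coinv · v) a)
    (fun a w => smul_eq_algebraMap_aug_smul_of_fixed (of_smul_coinv · w) a) _ hf

theorem strebel_general (p : ℕ) (hp : p.Prime) (Γ : Type*) [Group Γ] [Finite Γ]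
    (hΓ : IsPGroup p Γ) {M N : Type*} [AddCommGroup M]
    [Module (MonoidAlgebra (ZMod p) Γ) M] [AddCommGroup N]
    [Module (MonoidAlgebra (ZMod p) Γ) N]
    [Module.Projective (MonoidAlgebra (ZMod p) Γ) N]
    (f : M →ₗ[MonoidAlgebra (ZMod p) Γ] N)
    (hinj : Function.Injective (coinvMap p Γ f)) :
    Function.Injective f := by
  have : Fact p.Prime := ⟨hp⟩
  obtain ⟨g, hg⟩ := exists_leftInverse_coinvMap f hinj
  obtain ⟨h, hh⟩ := Module.projective_lifting_property (coinvSub p Γ M).mkQ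
    (g ∘ₗ (coinvSub p Γ N).mkQ) (Submodule.mkQ_surjective _)
  have hhf : ∀ x, h (f x) - x ∈ coinvSub p Γ M := fun x => by
    rw [← Submodule.Quotient.mk_eq_zero, Submodule.Quotient.mk_sub, sub_eq_zero]
    calc Submodule.Quotient.mk (h (f x))
        = g (coinvMap p Γ f (Submodule.Quotient.mk x)) := LinearMap.congr_fun hh (f x)
      _ = Submodule.Quotient.mk x := LinearMap.congr_fun hg _
  exact Function.Injective.of_comp (f := h)
    (LinearMap.injective_of_forall_sub_mem_smul_top (isNilpotent_augIdeal hΓ) (h ∘ₗ f) hhf)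

/-- Strebel's lemma: for a finite p-group `Γ`, a homomorphism of
projective `ℤ/p[Γ]`-modules whose image under `− ⊗_{ℤ/p[Γ]} ℤ/p` is injective is
itself injective. -/
theorem strebel (p : ℕ) (hp : p.Prime) (Γ : Type*) [Group Γ] [Finite Γ]
    (hΓ : IsPGroup p Γ) {M N : Type*} [AddCommGroup M]
    [Module (MonoidAlgebra (ZMod p) Γ) M] [AddCommGroup N]
    [Module (MonoidAlgebra (ZMod p) Γ) N]
    [Module.Projective (MonoidAlgebra (ZMod p) Γ) M]
    [Module.Projective (MonoidAlgebra (ZMod p) Γ) N]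
    (f : M →ₗ[MonoidAlgebra (ZMod p) Γ] N)
    (hinj : Function.Injective (coinvMap p Γ f)) :
    Function.Injective f :=
  strebel_general p hp Γ hΓ f hinj
end

section
/- Let Γ be a finite p-group, and let C_* be a non-negative chain complex of right ℤ/p[Γ]-modules which is finitely generated and projective in dimensions 0 ≤ i ≤ m. If H_i(C_* ⊗_{ℤ/p[Γ]} ℤ/p) = 0 for 0 ≤ i ≤ m, then H_i(C_*) = 0 for 0 ≤ i ≤ m. -/
/-- The cycles of a chain complex `(D_*, d_*)` in degree `q` (all of `D_0` in degree 0,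
`ker d_{q}` in degree `q+1`). -/
@[reducible] noncomputable def cyclesSub {R : Type*} [Ring R] {D : ℕ → Type*}
    [∀ q, AddCommGroup (D q)] [∀ q, Module R (D q)]
    (d : ∀ q, D (q + 1) →ₗ[R] D q) : ∀ q, Submodule R (D q)
  | 0 => ⊤
  | (k + 1) => LinearMap.ker (d k)

/-- The degree-`q` homology of the chain complex `(D_*, d_*)`: cycles modulo
boundaries. -/
@[reducible] noncomputable def homologyOf {R : Type*} [Ring R] {D : ℕ → Type*}
    [∀ q, AddCommGroup (D q)] [∀ q, Module R (D q)]
    (d : ∀ q, D (q + 1) →ₗ[R] D q) (q : ℕ) :=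
  ↥(cyclesSub d q) ⧸
    Submodule.comap (cyclesSub d q).subtype (LinearMap.range (d q))

/-!
Over `R = ℤ/p[Γ]` with augmentation ideal `I`, Nakayama's lemma holds for finite modules: if
`M ≠ 0` is finite, the `p`-group `Γ` acting on the `p`-group `Hom(M, ℤ/p)` fixes a nonzero
functional, and an invariant functional vanishes on `I·M`, so `I·M ≠ M`. Hence an endomorphism
`φ ≡ id (mod I)` of a finite `R`-module is surjective, so bijective.

Exactness of `C_* ⊗_R ℤ/p` in degrees `≤ m` and projectivity of `C_j` give, step by step, maps
`t_j : C_j → C_{j+1}` with `d t_j + t_{j-1} d ≡ id (mod I)` for `j ≤ m`. For `i ≤ m` the map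
`φ = d t_i + t_{i-1} d` is then a bijection of the finite module `C_i` sending cycles into
boundaries, and counting elements gives `Z_i = B_i`.
-/

theorem ZMod.prime_dvd_natCard_of_nontrivial {p : ℕ} [Fact p.Prime] (V : Type*) [AddCommGroup V]
    [Module (ZMod p) V] [Finite V] [Nontrivial V] : p ∣ Nat.card V := by
  have : Module.Finite (ZMod p) V := Module.Finite.of_finite
  rw [Module.natCard_eq_pow_finrank (K := ZMod p), Nat.card_zmod]
  exact dvd_pow_self p Module.finrank_pos.ne'

instance (p : ℕ) [NeZero p] (Γ : Type*) [Finite Γ] : Finite (MonoidAlgebra (ZMod p) Γ) :=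
  Finite.of_equiv _ (MonoidAlgebra.coeffEquiv.trans Finsupp.equivFunOnFinite).symm

theorem Module.projective_lifting_property_mod {R P A B : Type*} [Ring R] [AddCommGroup P]
    [Module R P] [AddCommGroup A] [Module R A] [AddCommGroup B] [Module R B] [Projective R P]
    (f : B →ₗ[R] A) (w : P →ₗ[R] A) (N : Submodule R A)
    (h : ∀ x, w x ∈ LinearMap.range f ⊔ N) :
    ∃ s : P →ₗ[R] B, ∀ x, f (s x) - w x ∈ N := by
  have hrange : LinearMap.range (f.coprod N.subtype) = LinearMap.range f ⊔ N := by
    rw [LinearMap.range_coprod, N.range_subtype]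
  obtain ⟨σ, hσ⟩ := Module.projective_lifting_property (f.coprod N.subtype).rangeRestrict
    (w.codRestrict _ fun x => hrange ▸ h x) (LinearMap.surjective_rangeRestrict _)
  refine ⟨LinearMap.fst R B N ∘ₗ σ, fun x => ?_⟩
  have hx : f (σ x).1 + (σ x).2 = w x := congrArg Subtype.val (LinearMap.congr_fun hσ x)
  rw [← hx]
  simp

theorem Submodule.eq_of_le_of_map_le {R M : Type*} [Ring R] [AddCommGroup M] [Module R M]
    [Finite M] {N P : Submodule R M} {f : M →ₗ[R] M} (hf : Function.Injective f)
    (hNP : N ≤ P) (hPN : P.map f ≤ N) : N = P := by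
  refine SetLike.coe_injective (Set.eq_of_subset_of_ncard_le hNP ?_ (Set.toFinite _))
  rw [← Set.ncard_image_of_injective _ hf, ← Submodule.map_coe]
  exact Set.ncard_le_ncard hPN (Set.toFinite _)

section Homology

variable {R : Type*} [Ring R] {D : ℕ → Type*} [∀ q, AddCommGroup (D q)]
  [∀ q, Module R (D q)] (d : ∀ q, D (q + 1) →ₗ[R] D q)

theorem homologyOf_subsingleton_iff (q : ℕ) :
    Subsingleton (homologyOf d q) ↔ cyclesSub d q ≤ LinearMap.range (d q) := by
  rw [homologyOf, Submodule.Quotient.subsingleton_iff, Submodule.comap_subtype_eq_top]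

theorem range_le_cyclesSub (hd : ∀ q, (d q).comp (d (q + 1)) = 0) :
    ∀ q, LinearMap.range (d q) ≤ cyclesSub d q
  | 0 => le_top
  | k + 1 => LinearMap.range_le_ker_iff.mpr (hd k)

end Homology

section Coinvariants

variable {p : ℕ} {Γ : Type*} [Group Γ] {M N : Type*} [AddCommGroup M]
  [Module (MonoidAlgebra (ZMod p) Γ) M] [AddCommGroup N] [Module (MonoidAlgebra (ZMod p) Γ) N]

theorem aug_single (g : Γ) (c : ZMod p) : aug p Γ (MonoidAlgebra.single g c) = c := by
  simp [aug, MonoidAlgebra.lift_single]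

theorem map_coinvSub_le (f : M →ₗ[MonoidAlgebra (ZMod p) Γ] N) :
    (coinvSub p Γ M).map f ≤ coinvSub p Γ N := by
  rw [coinvSub, coinvSub, Submodule.map_smul'']
  exact Submodule.smul_mono le_rfl le_top

theorem mk_mem_range_coinvMap_iff (f : M →ₗ[MonoidAlgebra (ZMod p) Γ] N) (y : N) :
    Submodule.Quotient.mk y ∈ LinearMap.range (coinvMap p Γ f) ↔
      y ∈ LinearMap.range f ⊔ coinvSub p Γ N := by
  rw [coinvMap, Submodule.range_mapQ, ← Submodule.mkQ_apply, ← Submodule.mem_comap,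
    Submodule.comap_map_mkQ, sup_comm]

theorem mk_mem_ker_coinvMap_iff (f : M →ₗ[MonoidAlgebra (ZMod p) Γ] N) (x : M) :
    Submodule.Quotient.mk x ∈ LinearMap.ker (coinvMap p Γ f) ↔ f x ∈ coinvSub p Γ N := by
  rw [LinearMap.mem_ker, coinvMap, Submodule.mapQ_apply, Submodule.Quotient.mk_eq_zero]

theorem apply_eq_zero_of_mem_coinvSub [Module (ZMod p) M]
    [IsScalarTower (ZMod p) (MonoidAlgebra (ZMod p) Γ) M] (f : Module.Dual (ZMod p) M)
    (hf : ∀ g x, f (MonoidAlgebra.of (ZMod p) Γ g • x) = f x) {x : M}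
    (hx : x ∈ coinvSub p Γ M) : f x = 0 := by
  have hsmul (r : MonoidAlgebra (ZMod p) Γ) (y : M) : f (r • y) = aug p Γ r * f y := by
    induction r using MonoidAlgebra.induction_linear with
    | zero => simp
    | add a b ha hb => rw [add_smul, map_add, ha, hb, map_add, add_mul]
    | single g c =>
      rw [aug_single, ← MonoidAlgebra.smul_of, smul_assoc, map_smul, hf, smul_eq_mul]
  refine Submodule.smul_induction_on hx (fun r hr y _ => ?_) fun y z hy hz => ?_
  · rw [hsmul, RingHom.mem_ker.mp hr, zero_mul]
  · rw [map_add, hy, hz, add_zero]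

theorem coinvSub_ne_top [Fact p.Prime] (hΓ : IsPGroup p Γ) [Finite M] [Nontrivial M] :
    coinvSub p Γ M ≠ ⊤ := by
  let _ : Module (ZMod p) M := Module.compHom M (algebraMap (ZMod p) (MonoidAlgebra (ZMod p) Γ))
  have : IsScalarTower (ZMod p) (MonoidAlgebra (ZMod p) Γ) M :=
    IsScalarTower.of_algebraMap_smul fun _ _ => rfl
  let ρ := Representation.ofModule' (k := ZMod p) (G := Γ) M
  let _ : MulAction Γ (Module.Dual (ZMod p) M) := MulAction.compHom _ ρ.dual
  have : Finite (Module.Dual (ZMod p) M) := Module.finite_of_finite (ZMod p)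
  obtain ⟨f, hf, hf0⟩ := hΓ.exists_fixed_point_of_prime_dvd_card_of_fixed_point
    (Module.Dual (ZMod p) M) (ZMod.prime_dvd_natCard_of_nontrivial _) (a := 0)
    fun g => map_zero (ρ.dual g)
  intro htop
  refine hf0 (LinearMap.ext fun x =>
    (apply_eq_zero_of_mem_coinvSub f (fun g y => ?_) (htop ▸ Submodule.mem_top)).symm)
  have : ρ.dual g⁻¹ f y = f y := LinearMap.congr_fun (hf g⁻¹) y
  simpa [ρ, Representation.ofModule', Module.Dual.transpose_apply] using this

theorem eq_top_of_sup_coinvSub_eq_top [Fact p.Prime] (hΓ : IsPGroup p Γ) [Finite M]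
    {K : Submodule (MonoidAlgebra (ZMod p) Γ) M} (h : K ⊔ coinvSub p Γ M = ⊤) : K = ⊤ := by
  by_contra hK
  have : Nontrivial (M ⧸ K) := Submodule.Quotient.nontrivial_iff.mpr hK
  have : Finite (M ⧸ K) := Finite.of_surjective _ K.mkQ_surjective
  refine coinvSub_ne_top hΓ (M := M ⧸ K) (top_le_iff.mp ?_)
  exact ((Submodule.map_mkQ_eq_top K _).mpr h).ge.trans (map_coinvSub_le K.mkQ)

theorem bijective_of_sub_mem_coinvSub [Fact p.Prime] (hΓ : IsPGroup p Γ) [Finite M]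
    (φ : M →ₗ[MonoidAlgebra (ZMod p) Γ] M) (h : ∀ x, φ x - x ∈ coinvSub p Γ M) :
    Function.Bijective φ := by
  have hsurj : Function.Surjective φ := by
    refine LinearMap.range_eq_top.mp (eq_top_of_sup_coinvSub_eq_top hΓ ?_)
    refine eq_top_iff.mpr fun x _ => ?_
    simpa using Submodule.sub_mem_sup (LinearMap.mem_range_self φ x) (h x)
  exact ⟨Finite.injective_iff_surjective.mpr hsurj, hsurj⟩

end Coinvariants

section Contraction

variable {p : ℕ} {Γ : Type*} [Group Γ] {C : ℕ → Type*} [∀ q, AddCommGroup (C q)]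
  [∀ q, Module (MonoidAlgebra (ZMod p) Γ) (C q)]
  (d : ∀ q, C (q + 1) →ₗ[MonoidAlgebra (ZMod p) Γ] C q)

/-- `u` plays the role of `t_{j-1} ∘ d_{j-1}` (and is `0` for `j = 0`). -/
theorem exists_contraction_mod_coinvSub {m : ℕ}
    (hproj : ∀ i, i ≤ m → Module.Projective (MonoidAlgebra (ZMod p) Γ) (C i))
    (hd : ∀ q, (d q).comp (d (q + 1)) = 0)
    (hvanish : ∀ i, i ≤ m →
      Subsingleton (homologyOf (D := fun q => C q ⧸ coinvSub p Γ (C q))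
        (fun q => coinvMap p Γ (d q)) i)) :
    ∀ j, j ≤ m → ∃ (u : C j →ₗ[MonoidAlgebra (ZMod p) Γ] C j)
      (t : C j →ₗ[MonoidAlgebra (ZMod p) Γ] C (j + 1)),
      cyclesSub d j ≤ LinearMap.ker u ∧ ∀ x, d j (t x) + u x - x ∈ coinvSub p Γ (C j) := by
  have hexact i hi := (homologyOf_subsingleton_iff _ i).mp (hvanish i hi)
  intro j hj
  induction j with
  | zero =>
    have := hproj 0 hj
    obtain ⟨t, ht⟩ := Module.projective_lifting_property_mod (d 0) LinearMap.id _ fun x =>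
      (mk_mem_range_coinvMap_iff _ x).mp (hexact 0 hj Submodule.mem_top)
    exact ⟨0, t, fun _ _ => rfl, fun x => by simpa using ht x⟩
  | succ j ih =>
    obtain ⟨u, t, hu, ht⟩ := ih (Nat.le_of_succ_le hj)
    have := hproj (j + 1) hj
    have hcycle : ∀ x, d j (x - t (d j x)) ∈ coinvSub p Γ (C j) := fun x => by
      have hux : u (d j x) = 0 := hu (range_le_cyclesSub d hd j (LinearMap.mem_range_self _ x))
      simpa [hux] using neg_mem (ht (d j x))
    obtain ⟨t', ht'⟩ := Module.projective_lifting_property_mod (d (j + 1))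
      (LinearMap.id - t ∘ₗ d j) _ fun x =>
        (mk_mem_range_coinvMap_iff _ _).mp
          (hexact (j + 1) hj ((mk_mem_ker_coinvMap_iff _ _).mpr (hcycle x)))
    refine ⟨t ∘ₗ d j, t', LinearMap.ker_le_ker_comp _ _, fun x => ?_⟩
    simpa [sub_sub_eq_add_sub] using ht' x

end Contraction

/-- if `C_*` is a non-negative chain complex of right `ℤ/p[Γ]`-modules
(`Γ` a finite p-group) which is finitely generated and projective in dimensions
`i ≤ m`, and `H_i(C_* ⊗_{ℤ/p[Γ]} ℤ/p) = 0` for `i ≤ m`, then `H_i(C_*) = 0` for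
`i ≤ m`. -/
theorem homology_subsingleton_of_coinv_homology_subsingleton (p : ℕ) (hp : p.Prime)
    (Γ : Type*) [Group Γ] [Finite Γ] (hΓ : IsPGroup p Γ)
    (C : ℕ → Type*) [∀ q, AddCommGroup (C q)]
    [∀ q, Module (MonoidAlgebra (ZMod p) Γ) (C q)]
    (m : ℕ)
    (hfin : ∀ i, i ≤ m → Module.Finite (MonoidAlgebra (ZMod p) Γ) (C i))
    (hproj : ∀ i, i ≤ m → Module.Projective (MonoidAlgebra (ZMod p) Γ) (C i))
    (d : ∀ q, C (q + 1) →ₗ[MonoidAlgebra (ZMod p) Γ] C q)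
    (hd : ∀ q, (d q).comp (d (q + 1)) = 0)
    (hvanish : ∀ i, i ≤ m →
      Subsingleton (homologyOf (D := fun q => C q ⧸ coinvSub p Γ (C q))
        (fun q => coinvMap p Γ (d q)) i)) :
    ∀ i, i ≤ m → Subsingleton (homologyOf d i) := by
  have : Fact p.Prime := ⟨hp⟩
  intro i hi
  obtain ⟨u, t, hu, ht⟩ := exists_contraction_mod_coinvSub d hproj hd hvanish i hi
  have := hfin i hi
  have : Finite (C i) := Module.finite_of_finite (MonoidAlgebra (ZMod p) Γ)
  have hφ := bijective_of_sub_mem_coinvSub hΓ (d i ∘ₗ t + u) ht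
  rw [homologyOf_subsingleton_iff]
  refine (Submodule.eq_of_le_of_map_le hφ.1 (range_le_cyclesSub d hd i) ?_).ge
  rintro _ ⟨z, hz, rfl⟩
  exact ⟨t z, by simp [LinearMap.mem_ker.mp (hu hz)]⟩
end

section
/- Suppose φ: A → B induces an isomorphism on H_1(−; ℤ/p) and the composition H_2(A; ℤ/p) → H_2(B; ℤ/p) → H_2(B; ℤ/p)/Φ_{p,m}(B) is surjective, where Φ_{p,m}(B) = ker(H_2(B; ℤ/p) → H_2(B/B_{p,m}; ℤ/p)). Then for every n ≤ m+1, φ induces an isomorphism A/A_{p,n} → B/B_{p,n}. -/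
open scoped commutatorElement

/-- The p-lower central series, indexed as in the paper: `G_{p,1} = G`,
`G_{p,n+1} = (G_{p,n})^p [G_{p,n}, G]`.  (The value at `0` is set to `⊤`.) -/
def lowerP (p : ℕ) (G : Type*) [Group G] : ℕ → Subgroup G
  | 0 => ⊤
  | 1 => ⊤
  | (k + 2) =>
      Subgroup.closure
        ({x | ∃ a ∈ lowerP p G (k + 1), x = a ^ p} ∪
         {x | ∃ a ∈ lowerP p G (k + 1), ∃ b : G, x = ⁅a, b⁆})

theorem lowerP_map_le {G H : Type*} [Group G] [Group H] (p : ℕ) (φ : G →* H) :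
    ∀ n, (lowerP p G n).map φ ≤ lowerP p H n
  | 0 => le_top
  | 1 => le_top
  | (k + 2) => by
      show (Subgroup.closure _).map φ ≤ Subgroup.closure _
      rw [MonoidHom.map_closure]
      apply Subgroup.closure_mono
      rintro x ⟨y, hy | hy, rfl⟩
      · obtain ⟨a, ha, rfl⟩ := hy
        exact Or.inl ⟨φ a, lowerP_map_le p φ (k + 1) (Subgroup.mem_map_of_mem φ ha), by simp⟩
      · obtain ⟨a, ha, b, rfl⟩ := hy
        exact Or.inr ⟨φ a, lowerP_map_le p φ (k + 1) (Subgroup.mem_map_of_mem φ ha),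
          φ b, by simp [commutatorElement_def]⟩

instance lowerP_normal (p : ℕ) {G : Type*} [Group G] (n : ℕ) : (lowerP p G n).Normal := by
  constructor
  intro x hx g
  have := lowerP_map_le p (MulAut.conj g).toMonoidHom n (Subgroup.mem_map_of_mem _ hx)
  simpa using this

/-- The map `A/A_{p,n} → B/B_{p,n}` induced by `φ`. -/
def lowerPQuotMap {G H : Type*} [Group G] [Group H] (p : ℕ) (φ : G →* H) (n : ℕ) :
    G ⧸ lowerP p G n →* H ⧸ lowerP p H n :=
  QuotientGroup.map _ _ φ (Subgroup.map_le_iff_le_comap.mp (lowerP_map_le p φ n))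


open Finsupp

section BarHomology
variable (p : ℕ)

/-- Degree-2 differential of the inhomogeneous bar complex computing `H_*(G; ℤ/p)`
(trivial coefficients): `[g|h] ↦ [h] - [gh] + [g]`. -/
noncomputable def barD2 (G : Type*) [Group G] : ((G × G) →₀ ZMod p) →ₗ[ZMod p] (G →₀ ZMod p) :=
  Finsupp.lift _ (ZMod p) _ fun x =>
    single x.2 1 - single (x.1 * x.2) 1 + single x.1 1

/-- Degree-3 differential of the inhomogeneous bar complex:
`[g|h|j] ↦ [h|j] - [gh|j] + [g|hj] - [g|h]`. -/
noncomputable def barD3 (G : Type*) [Group G] :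
    ((G × G × G) →₀ ZMod p) →ₗ[ZMod p] ((G × G) →₀ ZMod p) :=
  Finsupp.lift _ (ZMod p) _ fun x =>
    single (x.2.1, x.2.2) 1 - single (x.1 * x.2.1, x.2.2) 1
      + single (x.1, x.2.1 * x.2.2) 1 - single (x.1, x.2.1) 1

/-- `H_1(G; ℤ/p)`, group homology with (trivial) coefficients `ℤ/p`, computed from the
bar complex: since the coefficients are trivial the degree-1 differential is zero, so
`H_1` is the quotient of the 1-chains by the image of `barD2`. -/
@[reducible] noncomputable def groupH1 (G : Type*) [Group G] :=
  (G →₀ ZMod p) ⧸ LinearMap.range (barD2 p G)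

/-- `H_2(G; ℤ/p)`, group homology with (trivial) coefficients `ℤ/p`, computed from the
bar complex: the 2-cycles modulo the 2-boundaries, realized as the image of the
2-cycles in the quotient of the 2-chains by the 2-boundaries. -/
@[reducible] noncomputable def groupH2 (G : Type*) [Group G] :=
  ↥(Submodule.map (Submodule.mkQ (LinearMap.range (barD3 p G)))
      (LinearMap.ker (barD2 p G)))

variable {G H : Type*} [Group G] [Group H]

lemma barD2_single (x : G × G) (b : ZMod p) :
    barD2 p G (single x b) = b • (single x.2 1 - single (x.1 * x.2) 1 + single x.1 1) := by
  simp [barD2, Finsupp.lift_apply, Finsupp.sum_single_index]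

lemma barD3_single (x : G × G × G) (b : ZMod p) :
    barD3 p G (single x b) = b • (single (x.2.1, x.2.2) 1 - single (x.1 * x.2.1, x.2.2) 1
      + single (x.1, x.2.1 * x.2.2) 1 - single (x.1, x.2.1) 1) := by
  simp [barD3, Finsupp.lift_apply, Finsupp.sum_single_index]

lemma lmap_single {α β : Type*} (f : α → β) (a : α) (b : ZMod p) :
    Finsupp.lmapDomain (ZMod p) (ZMod p) f (single a b) = single (f a) b := by
  simp [Finsupp.lmapDomain_apply, Finsupp.mapDomain_single]

lemma barD2_comm (φ : G →* H) :
    (barD2 p H).comp (Finsupp.lmapDomain (ZMod p) (ZMod p) (Prod.map φ φ)) =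
      (Finsupp.lmapDomain (ZMod p) (ZMod p) φ).comp (barD2 p G) := by
  apply Finsupp.lhom_ext
  intro a b
  simp only [LinearMap.coe_comp, Function.comp_apply, lmap_single, barD2_single,
    map_smul, map_sub, map_add, Prod.map_apply, Prod.map_fst, Prod.map_snd, map_mul]

lemma barD3_comm (φ : G →* H) :
    (barD3 p H).comp (Finsupp.lmapDomain (ZMod p) (ZMod p) (Prod.map φ (Prod.map φ φ))) =
      (Finsupp.lmapDomain (ZMod p) (ZMod p) (Prod.map φ φ)).comp (barD3 p G) := by
  apply Finsupp.lhom_ext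
  intro a b
  simp only [LinearMap.coe_comp, Function.comp_apply, lmap_single, barD3_single,
    map_smul, map_sub, map_add, Prod.map_apply, Prod.map_fst, Prod.map_snd, map_mul]

/-- The map `H_1(G; ℤ/p) → H_1(H; ℤ/p)` induced by a group homomorphism. -/
noncomputable def groupH1Map (φ : G →* H) : groupH1 p G →ₗ[ZMod p] groupH1 p H :=
  Submodule.mapQ _ _ (Finsupp.lmapDomain (ZMod p) (ZMod p) φ) (by
    rintro x ⟨y, rfl⟩
    exact ⟨Finsupp.lmapDomain (ZMod p) (ZMod p) (Prod.map φ φ) y,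
      congrFun (congrArg DFunLike.coe (barD2_comm p φ)) y⟩)

/-- The map on 2-chains modulo 2-boundaries induced by a group homomorphism. -/
noncomputable def barQ2Map (φ : G →* H) :
    ((G × G) →₀ ZMod p) ⧸ LinearMap.range (barD3 p G) →ₗ[ZMod p]
      ((H × H) →₀ ZMod p) ⧸ LinearMap.range (barD3 p H) :=
  Submodule.mapQ _ _ (Finsupp.lmapDomain (ZMod p) (ZMod p) (Prod.map φ φ)) (by
    rintro x ⟨y, rfl⟩
    exact ⟨Finsupp.lmapDomain (ZMod p) (ZMod p) (Prod.map φ (Prod.map φ φ)) y,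
      congrFun (congrArg DFunLike.coe (barD3_comm p φ)) y⟩)

/-- The map `H_2(G; ℤ/p) → H_2(H; ℤ/p)` induced by a group homomorphism. -/
noncomputable def groupH2Map (φ : G →* H) : groupH2 p G →ₗ[ZMod p] groupH2 p H :=
  (barQ2Map p φ).restrict (p := Submodule.map (Submodule.mkQ (LinearMap.range (barD3 p G)))
      (LinearMap.ker (barD2 p G)))
    (q := Submodule.map (Submodule.mkQ (LinearMap.range (barD3 p H)))
      (LinearMap.ker (barD2 p H)))
    (by
      rintro x ⟨y, hy, rfl⟩
      refine ⟨Finsupp.lmapDomain (ZMod p) (ZMod p) (Prod.map φ φ) y, ?_, ?_⟩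
      · have h := congrFun (congrArg DFunLike.coe (barD2_comm p φ)) y
        simp only [LinearMap.coe_comp, Function.comp_apply] at h
        exact LinearMap.mem_ker.mpr (by rw [h, LinearMap.mem_ker.mp hy, map_zero])
      · show barQ2Map p φ (Submodule.mkQ _ y) = Submodule.mkQ _ _
        rw [Submodule.mkQ_apply, Submodule.mkQ_apply, barQ2Map, Submodule.mapQ_apply])

end BarHomology

/-!
Induction on `n`. For `n ≤ 1` both quotients are trivial, and `G/G_{p,2} ≅ H₁(G; ℤ/p)`
naturally, which settles `n = 2`. For the step, Stallings' sequence
`H₂(G) → H₂(G/G_{p,n+1}) → G_{p,n+1}/G_{p,n+2} → 0` is exact and natural. If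
`A/A_{p,n+1} ≅ B/B_{p,n+1}`, the middle terms for `A` and `B` agree, and for `n + 1 ≤ m` the
hypothesis on `H₂` says that the images of `H₂(A)` and `H₂(B)` in them coincide. So the map on the
layers `G_{p,n+1}/G_{p,n+2}` is bijective, and the five lemma for
`1 → G_{p,n+1}/G_{p,n+2} → G/G_{p,n+2} → G/G_{p,n+1} → 1` gives the next level.

Stallings' map sends a bar 2-chain `[q|r]` to the class of `q.out * r.out * (q * r).out⁻¹`.
It kills boundaries by the cocycle identity, and kills the image of `H₂(G)`
because there the cocycle is a coboundary. It is onto because the generators `a^p` and `⁅a, b⁆` of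
`G_{p,n+1}` are hit by the cycles `∑_{i<p} [q^i|q]` and `[q|r] - [r|q]`. For exactness, a cycle
`z` with trivial image is lifted to `G` through the section; the boundary of the lift is a chain
on `G_{p,n+1}` with trivial value in the layer, so it is a combination of the relations
`[ν] + [μ] - [νμ]`, `[a^p]` and `[⁅a, b⁆]`. Each of these bounds a 2-chain of `G` whose image in
`G/G_{p,n+1}` is a boundary up to a multiple of `[1|1]`, and a cycle of that form is a boundary.
-/

section LowerP
variable (p : ℕ) {G : Type*} [Group G]

lemma lowerP_add_two (k : ℕ) :
    lowerP p G (k + 2) = Subgroup.closure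
      ({x | ∃ a ∈ lowerP p G (k + 1), x = a ^ p} ∪
        {x | ∃ a ∈ lowerP p G (k + 1), ∃ b : G, x = ⁅a, b⁆}) :=
  rfl

lemma pow_mem_lowerP_succ {a : G} : ∀ {k : ℕ}, a ∈ lowerP p G k → a ^ p ∈ lowerP p G (k + 1)
  | 0, _ => Subgroup.mem_top _
  | _ + 1, ha => Subgroup.subset_closure (Or.inl ⟨a, ha, rfl⟩)

lemma commutatorElement_mem_lowerP_succ {a : G} :
    ∀ {k : ℕ}, a ∈ lowerP p G k → ∀ b : G, ⁅a, b⁆ ∈ lowerP p G (k + 1)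
  | 0, _, _ => Subgroup.mem_top _
  | _ + 1, ha, b => Subgroup.subset_closure (Or.inr ⟨a, ha, b, rfl⟩)

lemma lowerP_succ_le : ∀ n : ℕ, lowerP p G (n + 1) ≤ lowerP p G n
  | 0 | 1 => le_top
  | k + 2 => by
      rw [lowerP_add_two, Subgroup.closure_le]
      rintro x (⟨a, ha, rfl⟩ | ⟨a, ha, b, rfl⟩)
      · exact pow_mem ha p
      · rw [commutatorElement_def, mul_assoc, mul_assoc, ← mul_assoc b]
        exact mul_mem ha ((lowerP_normal p (k + 2)).conj_mem _ (inv_mem ha) b)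

lemma lowerP_antitone : Antitone (lowerP p G) :=
  antitone_nat_of_succ_le (lowerP_succ_le p)

variable (G) in
lemma subsingleton_quotient_lowerP {n : ℕ} (hn : n ≤ 1) : Subsingleton (G ⧸ lowerP p G n) := by
  obtain rfl | rfl : n = 0 ∨ n = 1 := by omega
  all_goals exact QuotientGroup.subsingleton_quotient_top

end LowerP

section BarComplex
variable (p : ℕ) {G H K : Type*} [Group G] [Group H] [Group K]

lemma barD2_comp_barD3 : (barD2 p G).comp (barD3 p G) = 0 := by
  refine Finsupp.lhom_ext fun x b => ?_
  simp only [LinearMap.coe_comp, Function.comp_apply, barD3_single, map_smul, map_sub, map_add,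
    barD2_single, LinearMap.zero_apply, one_smul, mul_assoc]
  rw [← smul_zero b]
  congr 1
  abel

lemma barD2_lmapDomain (φ : G →* H) (w : (G × G) →₀ ZMod p) :
    barD2 p H (Finsupp.lmapDomain (ZMod p) (ZMod p) (Prod.map φ φ) w) =
      Finsupp.lmapDomain (ZMod p) (ZMod p) φ (barD2 p G w) :=
  LinearMap.congr_fun (barD2_comm p φ) w

lemma barD2_sum_single_pow (g : G) (m : ℕ) :
    barD2 p G (∑ i ∈ Finset.range m, single (g ^ i, g) 1) =
      m • single g 1 + single 1 1 - single (g ^ m) 1 := by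
  induction m with
  | zero => simp
  | succ m ih =>
    rw [Finset.sum_range_succ, map_add, ih, barD2_single, one_smul, ← pow_succ, succ_nsmul]
    abel

noncomputable def groupH2.mk (w : (G × G) →₀ ZMod p) (hw : barD2 p G w = 0) : groupH2 p G :=
  ⟨Submodule.mkQ _ w, w, hw, rfl⟩

lemma groupH2.exists_mk_eq (x : groupH2 p G) : ∃ w hw, groupH2.mk p w hw = x := by
  obtain ⟨_, w, hw, rfl⟩ := x
  exact ⟨w, hw, rfl⟩

lemma groupH2.mk_congr {w w' : (G × G) →₀ ZMod p} (hw : barD2 p G w = 0)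
    (hw' : barD2 p G w' = 0) (h : w = w') : groupH2.mk p w hw = groupH2.mk p w' hw' := by
  subst h
  rfl

lemma groupH2.mk_eq_mk_iff {w w' : (G × G) →₀ ZMod p} (hw : barD2 p G w = 0)
    (hw' : barD2 p G w' = 0) :
    groupH2.mk p w hw = groupH2.mk p w' hw' ↔ w - w' ∈ LinearMap.range (barD3 p G) :=
  Subtype.ext_iff.trans (Submodule.Quotient.eq _)

lemma groupH2Map_mk (φ : G →* H) (w : (G × G) →₀ ZMod p) (hw : barD2 p G w = 0) :
    groupH2Map p φ (groupH2.mk p w hw) =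
      groupH2.mk p (Finsupp.lmapDomain (ZMod p) (ZMod p) (Prod.map φ φ) w)
        (by rw [barD2_lmapDomain, hw, map_zero]) :=
  rfl

lemma groupH2Map_comp (φ : G →* H) (ψ : H →* K) (x : groupH2 p G) :
    groupH2Map p (ψ.comp φ) x = groupH2Map p ψ (groupH2Map p φ x) := by
  obtain ⟨w, hw, rfl⟩ := groupH2.exists_mk_eq p x
  rw [groupH2Map_mk, groupH2Map_mk, groupH2Map_mk]
  exact groupH2.mk_congr p _ _ (by rw [← LinearMap.comp_apply, ← Finsupp.lmapDomain_comp]; rfl)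

lemma groupH2Map_id (x : groupH2 p G) : groupH2Map p (MonoidHom.id G) x = x := by
  obtain ⟨w, hw, rfl⟩ := groupH2.exists_mk_eq p x
  rw [groupH2Map_mk]
  exact groupH2.mk_congr p _ _ (by rw [Finsupp.lmapDomain_apply]; exact Finsupp.mapDomain_id)

lemma groupH2Map_bijective {φ : G →* H} (hφ : Function.Bijective φ) :
    Function.Bijective (groupH2Map p φ) := by
  let e := MulEquiv.ofBijective φ hφ
  refine Function.bijective_iff_has_inverse.mpr ⟨groupH2Map p e.symm.toMonoidHom, fun x => ?_,
    fun x => ?_⟩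
  · rw [← groupH2Map_comp, show e.symm.toMonoidHom.comp φ = MonoidHom.id G from
      MonoidHom.ext e.symm_apply_apply, groupH2Map_id]
  · rw [← groupH2Map_comp, show φ.comp e.symm.toMonoidHom = MonoidHom.id H from
      MonoidHom.ext e.apply_symm_apply, groupH2Map_id]

end BarComplex

section AlmostBoundaries
variable (p : ℕ) (G : Type*) [Group G]

noncomputable def almostBoundaries : Submodule (ZMod p) ((G × G) →₀ ZMod p) :=
  LinearMap.range (barD3 p G) ⊔ Submodule.span (ZMod p) {single (1, 1) 1}

variable {G}

lemma single_one_one_mem_almostBoundaries : single ((1 : G), (1 : G)) 1 ∈ almostBoundaries p G :=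
  Submodule.mem_sup_right (Submodule.mem_span_singleton_self _)

lemma single_one_mem_almostBoundaries (x : G) : single (1, x) 1 ∈ almostBoundaries p G := by
  have h : single (1, x) 1 = barD3 p G (single (1, 1, x) 1) + single (1, 1) 1 := by
    rw [barD3_single, one_smul, one_mul, one_mul]
    abel
  rw [h]
  exact add_mem (Submodule.mem_sup_left (LinearMap.mem_range_self _ _))
    (single_one_one_mem_almostBoundaries p)

lemma mem_range_barD3_of_mem_almostBoundaries {c : (G × G) →₀ ZMod p}
    (hc : c ∈ almostBoundaries p G) (hc₂ : barD2 p G c = 0) : c ∈ LinearMap.range (barD3 p G) := by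
  obtain ⟨_, ⟨y, rfl⟩, _, hk, rfl⟩ := Submodule.mem_sup.mp hc
  obtain ⟨k, rfl⟩ := Submodule.mem_span_singleton.mp hk
  have hk0 : k = 0 := by
    have := congrArg (· 1) hc₂
    simpa [← LinearMap.comp_apply, barD2_comp_barD3, barD2_single] using this
  rw [hk0, zero_smul, add_zero]
  exact LinearMap.mem_range_self _ _

end AlmostBoundaries

section LowerPMk
variable (p : ℕ) (G : Type*) [Group G]

abbrev lowerPMk (k : ℕ) : G →* G ⧸ lowerP p G k := QuotientGroup.mk' _

variable {G}

lemma lowerPMk_eq_one_iff {k : ℕ} {g : G} : lowerPMk p G k g = 1 ↔ g ∈ lowerP p G k :=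
  QuotientGroup.eq_one_iff g

lemma lowerPMk_conj {n : ℕ} {ν : G} (hν : ν ∈ lowerP p G (n + 1)) (x : G) :
    lowerPMk p G (n + 2) (x * ν * x⁻¹) = lowerPMk p G (n + 2) ν := by
  rw [← mul_inv_eq_one, ← map_inv, ← map_mul, lowerPMk_eq_one_iff, ← commutatorElement_def,
    ← commutatorElement_inv]
  exact inv_mem (commutatorElement_mem_lowerP_succ p hν x)

lemma lowerPMk_commute {n : ℕ} {ν : G} (hν : ν ∈ lowerP p G (n + 1))
    (y : G ⧸ lowerP p G (n + 2)) : Commute (lowerPMk p G (n + 2) ν) y := by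
  induction y using QuotientGroup.induction_on with
  | H x =>
    change lowerPMk p G (n + 2) ν * lowerPMk p G (n + 2) x = _
    conv_lhs => rw [← lowerPMk_conj p hν x, ← map_mul, inv_mul_cancel_right, map_mul]
    rfl

lemma lowerPMk_pow_eq_one {n : ℕ} {ν : G} (hν : ν ∈ lowerP p G (n + 1)) :
    lowerPMk p G (n + 2) ν ^ p = 1 := by
  rw [← map_pow, lowerPMk_eq_one_iff]
  exact pow_mem_lowerP_succ p hν

instance : CommGroup (G ⧸ lowerP p G 2) where
  mul_comm x y := by
    induction x using QuotientGroup.induction_on with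
    | H a => exact (lowerPMk_commute p (n := 0) (Subgroup.mem_top a) y).eq

noncomputable instance : Module (ZMod p) (Additive (G ⧸ lowerP p G 2)) :=
  AddCommGroup.zmodModule fun x => by
    induction x using QuotientGroup.induction_on with
    | H a => exact lowerPMk_pow_eq_one p (n := 0) (Subgroup.mem_top a)

end LowerPMk

namespace Stallings

variable (p : ℕ) (G : Type*) [Group G] (n : ℕ)

/-- `G_{p,n+1}/G_{p,n+2}`, realised inside `G/G_{p,n+2}`. -/
def layer : Subgroup (G ⧸ lowerP p G (n + 2)) :=
  (lowerP p G (n + 1)).map (lowerPMk p G (n + 2))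

abbrev layerMk : lowerP p G (n + 1) →* layer p G n :=
  (lowerPMk p G (n + 2)).subgroupMap _

lemma coe_layerMk (ν : lowerP p G (n + 1)) :
    (layerMk p G n ν : G ⧸ lowerP p G (n + 2)) = lowerPMk p G (n + 2) ν :=
  rfl

instance : CommGroup (layer p G n) where
  mul_comm := by
    rintro ⟨_, ν, hν, rfl⟩ y
    exact Subtype.ext (lowerPMk_commute p hν y).eq

noncomputable instance : Module (ZMod p) (Additive (layer p G n)) :=
  AddCommGroup.zmodModule fun ⟨_, ν, hν, rfl⟩ => Subtype.ext (lowerPMk_pow_eq_one p hν)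

noncomputable def sectionCocycle (q r : G ⧸ lowerP p G (n + 1)) : G :=
  q.out * r.out * (q * r).out⁻¹

lemma sectionCocycle_mem (q r : G ⧸ lowerP p G (n + 1)) :
    sectionCocycle p G n q r ∈ lowerP p G (n + 1) := by
  rw [← lowerPMk_eq_one_iff]
  simp [sectionCocycle]

noncomputable def layerCocycle (q r : G ⧸ lowerP p G (n + 1)) : layer p G n :=
  layerMk p G n ⟨_, sectionCocycle_mem p G n q r⟩

lemma layerCocycle_mul_layerCocycle (q r s : G ⧸ lowerP p G (n + 1)) :
    layerCocycle p G n q r * layerCocycle p G n (q * r) s =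
      layerCocycle p G n r s * layerCocycle p G n q (r * s) := by
  have hcocycle : sectionCocycle p G n q r * sectionCocycle p G n (q * r) s =
      (q.out * sectionCocycle p G n r s * q.out⁻¹) * sectionCocycle p G n q (r * s) := by
    simp only [sectionCocycle, mul_assoc]
    group
  apply Subtype.ext
  simp only [layerCocycle, Subgroup.coe_mul, coe_layerMk]
  rw [← map_mul, hcocycle, map_mul, lowerPMk_conj p (sectionCocycle_mem p G n r s)]

noncomputable def connectingChain :
    ((G ⧸ lowerP p G (n + 1)) × (G ⧸ lowerP p G (n + 1)) →₀ ZMod p) →ₗ[ZMod p]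
      Additive (layer p G n) :=
  Finsupp.lift _ (ZMod p) _ fun x => Additive.ofMul (layerCocycle p G n x.1 x.2)

lemma connectingChain_single (x : (G ⧸ lowerP p G (n + 1)) × (G ⧸ lowerP p G (n + 1)))
    (b : ZMod p) :
    connectingChain p G n (single x b) = b • Additive.ofMul (layerCocycle p G n x.1 x.2) := by
  simp [connectingChain, Finsupp.lift_apply, Finsupp.sum_single_index]

lemma connectingChain_comp_barD3 :
    (connectingChain p G n).comp (barD3 p (G ⧸ lowerP p G (n + 1))) = 0 := by
  refine Finsupp.lhom_ext fun ⟨q, r, s⟩ b => ?_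
  simp only [LinearMap.coe_comp, Function.comp_apply, barD3_single, map_smul, map_sub, map_add,
    connectingChain_single, LinearMap.zero_apply, one_smul]
  have h := congrArg Additive.ofMul (layerCocycle_mul_layerCocycle p G n q r s)
  simp only [ofMul_mul] at h
  rw [sub_add_eq_add_sub, sub_sub, ← h, add_comm (Additive.ofMul (layerCocycle p G n q r)),
    sub_self, smul_zero]

/-- Stallings' map `H₂(G/G_{p,n+1}; ℤ/p) → G_{p,n+1}/G_{p,n+2}`. -/
noncomputable def connecting :
    groupH2 p (G ⧸ lowerP p G (n + 1)) →ₗ[ZMod p] Additive (layer p G n) :=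
  (Submodule.liftQ _ (connectingChain p G n)
    (LinearMap.range_le_ker_iff.mpr (connectingChain_comp_barD3 p G n))).comp
    (Submodule.subtype _)

lemma connecting_mk (z : (G ⧸ lowerP p G (n + 1)) × (G ⧸ lowerP p G (n + 1)) →₀ ZMod p)
    (hz : barD2 p _ z = 0) : connecting p G n (groupH2.mk p z hz) = connectingChain p G n z :=
  rfl


noncomputable def sectionDefect (g : G) : G :=
  (lowerPMk p G (n + 1) g).out⁻¹ * g

lemma sectionDefect_mem (g : G) : sectionDefect p G n g ∈ lowerP p G (n + 1) := by
  rw [← lowerPMk_eq_one_iff]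
  simp [sectionDefect]

noncomputable def layerDefect (g : G) : layer p G n :=
  layerMk p G n ⟨_, sectionDefect_mem p G n g⟩

variable {G} in
lemma layerDefect_mul_inv {g h : G} (hgh : g * h⁻¹ ∈ lowerP p G (n + 1)) :
    layerDefect p G n g * (layerDefect p G n h)⁻¹ = layerMk p G n ⟨g * h⁻¹, hgh⟩ := by
  have hq : lowerPMk p G (n + 1) h = lowerPMk p G (n + 1) g := by
    rw [← mul_inv_eq_one, ← map_inv, ← map_mul, lowerPMk_eq_one_iff]
    simpa using inv_mem hgh
  apply Subtype.ext
  simp only [layerDefect, Subgroup.coe_mul, Subgroup.coe_inv, coe_layerMk, ← map_inv, ← map_mul,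
    sectionDefect, hq]
  rw [← lowerPMk_conj p hgh (lowerPMk p G (n + 1) g).out⁻¹]
  congr 1
  group

lemma layerCocycle_mk_mk (g h : G) :
    layerCocycle p G n (lowerPMk p G (n + 1) g) (lowerPMk p G (n + 1) h) =
      (layerDefect p G n g)⁻¹ * ((layerDefect p G n h)⁻¹ * layerDefect p G n (g * h)) := by
  have hcocycle : sectionCocycle p G n (lowerPMk p G (n + 1) g) (lowerPMk p G (n + 1) h) =
      (g * (sectionDefect p G n g)⁻¹ * g⁻¹) *
        ((g * h) * ((sectionDefect p G n h)⁻¹ * sectionDefect p G n (g * h)) * (g * h)⁻¹) := by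
    simp only [sectionCocycle, sectionDefect, ← map_mul]
    group
  apply Subtype.ext
  simp only [layerCocycle, layerDefect, Subgroup.coe_mul, Subgroup.coe_inv, coe_layerMk]
  rw [hcocycle, map_mul, lowerPMk_conj p (inv_mem (sectionDefect_mem p G n g)),
    lowerPMk_conj p (mul_mem (inv_mem (sectionDefect_mem p G n h)) (sectionDefect_mem p G n _)),
    map_inv, map_mul, map_inv]

noncomputable def defectChain : (G →₀ ZMod p) →ₗ[ZMod p] Additive (layer p G n) :=
  Finsupp.lift _ (ZMod p) _ fun g => Additive.ofMul (layerDefect p G n g)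

lemma defectChain_single (g : G) (b : ZMod p) :
    defectChain p G n (single g b) = b • Additive.ofMul (layerDefect p G n g) := by
  simp [defectChain, Finsupp.lift_apply, Finsupp.sum_single_index]

lemma connectingChain_comp_lmapDomain :
    (connectingChain p G n).comp (Finsupp.lmapDomain (ZMod p) (ZMod p)
        (Prod.map (lowerPMk p G (n + 1)) (lowerPMk p G (n + 1)))) =
      -((defectChain p G n).comp (barD2 p G)) := by
  refine Finsupp.lhom_ext fun ⟨g, h⟩ b => ?_
  simp only [LinearMap.coe_comp, Function.comp_apply, lmap_single, barD2_single, map_smul,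
    map_sub, map_add, connectingChain_single, defectChain_single, LinearMap.neg_apply,
    Prod.map_apply, one_smul, layerCocycle_mk_mk, ofMul_mul, ofMul_inv, ← smul_neg]
  congr 1
  abel

lemma connecting_groupH2Map_lowerPMk (x : groupH2 p G) :
    connecting p G n (groupH2Map p (lowerPMk p G (n + 1)) x) = 0 := by
  obtain ⟨w, hw, rfl⟩ := groupH2.exists_mk_eq p x
  rw [groupH2Map_mk, connecting_mk, ← LinearMap.comp_apply, connectingChain_comp_lmapDomain,
    LinearMap.neg_apply, LinearMap.comp_apply, hw, map_zero, neg_zero]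

variable {G}

lemma connectingChain_sum_single_pow (a : G) (m : ℕ) :
    connectingChain p G n
        (∑ i ∈ Finset.range m, single (lowerPMk p G (n + 1) a ^ i, lowerPMk p G (n + 1) a) 1) =
      Additive.ofMul (layerDefect p G n (a ^ m)) - Additive.ofMul (layerDefect p G n 1) -
        m • Additive.ofMul (layerDefect p G n a) := by
  induction m with
  | zero => simp
  | succ m ih =>
    rw [Finset.sum_range_succ, map_add, ih, connectingChain_single, one_smul, ← map_pow,
      layerCocycle_mk_mk, ← pow_succ, succ_nsmul]
    simp only [ofMul_mul, ofMul_inv]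
    abel

variable {n}

lemma exists_connecting_eq_pow {a : G} (ha : a ∈ lowerP p G n) :
    ∃ ξ, ((connecting p G n ξ).toMul : G ⧸ lowerP p G (n + 2)) = lowerPMk p G (n + 2) (a ^ p) := by
  set q := lowerPMk p G (n + 1) a
  have hq : q ^ p = 1 := by
    rw [← map_pow, lowerPMk_eq_one_iff]
    exact pow_mem_lowerP_succ p ha
  have hz : barD2 p _ (∑ i ∈ Finset.range p, single (q ^ i, q) 1) = 0 := by
    rw [barD2_sum_single_pow, hq, ZModModule.char_nsmul_eq_zero, zero_add, sub_self]
  have hapow : a ^ p * 1⁻¹ ∈ lowerP p G (n + 1) := by simpa using pow_mem_lowerP_succ p ha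
  refine ⟨groupH2.mk p _ hz, ?_⟩
  rw [connecting_mk, connectingChain_sum_single_pow, ZModModule.char_nsmul_eq_zero, sub_zero,
    ← ofMul_div, div_eq_mul_inv, layerDefect_mul_inv p n hapow, toMul_ofMul, coe_layerMk]
  simp

lemma exists_connecting_eq_commutatorElement {a : G} (ha : a ∈ lowerP p G n) (b : G) :
    ∃ ξ, ((connecting p G n ξ).toMul : G ⧸ lowerP p G (n + 2)) = lowerPMk p G (n + 2) ⁅a, b⁆ := by
  set q := lowerPMk p G (n + 1) a
  set r := lowerPMk p G (n + 1) b
  have hab : a * b * (b * a)⁻¹ ∈ lowerP p G (n + 1) := by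
    simpa [commutatorElement_def, mul_assoc] using commutatorElement_mem_lowerP_succ p ha b
  have hqr : q * r = r * q := by
    rw [← map_mul, ← map_mul, ← mul_inv_eq_one, ← map_inv, ← map_mul, lowerPMk_eq_one_iff]
    exact hab
  have hz : barD2 p _ (single (q, r) 1 - single (r, q) 1) = 0 := by
    rw [map_sub, barD2_single, barD2_single, hqr, sub_eq_zero]
    simp only [one_smul]
    abel
  have hδ : Additive.ofMul (layerCocycle p G n q r) - Additive.ofMul (layerCocycle p G n r q) =
      Additive.ofMul (layerDefect p G n (a * b) * (layerDefect p G n (b * a))⁻¹) := by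
    rw [layerCocycle_mk_mk, layerCocycle_mk_mk]
    simp only [ofMul_mul, ofMul_inv]
    abel
  refine ⟨groupH2.mk p _ hz, ?_⟩
  rw [connecting_mk, map_sub, connectingChain_single, connectingChain_single, one_smul, one_smul,
    hδ, layerDefect_mul_inv p n hab, toMul_ofMul, coe_layerMk]
  simp [commutatorElement_def, mul_assoc]

variable (n)

lemma connecting_surjective : Function.Surjective (connecting p G (n + 1)) := by
  have key : ∀ ν ∈ lowerP p G (n + 2), ∃ ξ,
      ((connecting p G (n + 1) ξ).toMul : G ⧸ lowerP p G (n + 1 + 2)) =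
        lowerPMk p G (n + 1 + 2) ν := by
    intro ν hν
    rw [lowerP_add_two] at hν
    induction hν using Subgroup.closure_induction with
    | mem x hx =>
      rcases hx with ⟨a, ha, rfl⟩ | ⟨a, ha, b, rfl⟩
      exacts [exists_connecting_eq_pow p ha, exists_connecting_eq_commutatorElement p ha b]
    | one => exact ⟨0, by simp⟩
    | mul x y _ _ hx hy =>
      obtain ⟨ξ, hξ⟩ := hx
      obtain ⟨η, hη⟩ := hy
      exact ⟨ξ + η, by rw [map_add, toMul_add, Subgroup.coe_mul, hξ, hη, map_mul]⟩
    | inv x _ hx =>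
      obtain ⟨ξ, hξ⟩ := hx
      exact ⟨-ξ, by rw [map_neg, toMul_neg, Subgroup.coe_inv, hξ, map_inv]⟩
  intro x
  obtain ⟨ν, hν, hx⟩ := (Additive.toMul x).2
  obtain ⟨ξ, hξ⟩ := key ν hν
  exact ⟨ξ, Additive.toMul.injective (Subtype.ext (hξ.trans hx))⟩

variable (G)

noncomputable def boundingChains : Submodule (ZMod p) (lowerP p G (n + 1) →₀ ZMod p) where
  carrier := {c | ∃ u : (G × G) →₀ ZMod p,
    barD2 p G u = Finsupp.lmapDomain (ZMod p) (ZMod p) Subtype.val c ∧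
      Finsupp.lmapDomain (ZMod p) (ZMod p)
          (Prod.map (lowerPMk p G (n + 1)) (lowerPMk p G (n + 1))) u ∈
        almostBoundaries p (G ⧸ lowerP p G (n + 1))}
  add_mem' := by
    rintro c₁ c₂ ⟨u₁, h₁, h₁'⟩ ⟨u₂, h₂, h₂'⟩
    exact ⟨u₁ + u₂, by rw [map_add, map_add, h₁, h₂], by rw [map_add]; exact add_mem h₁' h₂'⟩
  zero_mem' := ⟨0, by simp, by rw [map_zero]; exact zero_mem _⟩
  smul_mem' := by
    rintro b c ⟨u, h, h'⟩
    exact ⟨b • u, by rw [map_smul, map_smul, h], by rw [map_smul]; exact Submodule.smul_mem _ _ h'⟩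

variable {G n}

lemma single_add_single_sub_single_mul_mem_boundingChains (ν μ : lowerP p G (n + 1)) :
    single ν 1 + single μ 1 - single (ν * μ) 1 ∈ boundingChains p G n := by
  have hν := (lowerPMk_eq_one_iff p).mpr ν.2
  have hμ := (lowerPMk_eq_one_iff p).mpr μ.2
  refine ⟨single (ν.1, μ.1) 1, ?_, ?_⟩
  · rw [barD2_single, one_smul, map_sub, map_add, lmap_single, lmap_single, lmap_single,
      Subgroup.coe_mul]
    abel
  · rw [lmap_single, Prod.map_apply, hν, hμ]
    exact single_one_one_mem_almostBoundaries p

lemma single_one_mem_boundingChains : single (1 : lowerP p G (n + 1)) 1 ∈ boundingChains p G n := by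
  simpa using single_add_single_sub_single_mul_mem_boundingChains p (1 : lowerP p G (n + 1)) 1

variable (G n)

noncomputable def boundingSubgroup : Subgroup (lowerP p G (n + 1)) where
  carrier := {ν | single ν 1 ∈ boundingChains p G n}
  one_mem' := single_one_mem_boundingChains p
  mul_mem' {ν μ} hν hμ := by
    simpa using sub_mem (add_mem hν hμ) (single_add_single_sub_single_mul_mem_boundingChains p ν μ)
  inv_mem' {ν} hν := by
    have h := sub_mem (add_mem (single_add_single_sub_single_mul_mem_boundingChains p ν ν⁻¹)
      (single_one_mem_boundingChains p)) hν
    rwa [mul_inv_cancel, sub_add_cancel, add_sub_cancel_left] at h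

variable {G n}

lemma pow_mem_boundingSubgroup (a : lowerP p G (n + 1)) : a ^ p ∈ boundingSubgroup p G n := by
  have ha := (lowerPMk_eq_one_iff p).mpr a.2
  refine ⟨single (1, 1) 1 - ∑ i ∈ Finset.range p, single (a.1 ^ i, a.1) 1, ?_, ?_⟩
  · rw [map_sub, barD2_sum_single_pow, ZModModule.char_nsmul_eq_zero, zero_add, barD2_single,
      one_smul, one_mul, lmap_single, SubmonoidClass.coe_pow]
    abel
  · rw [map_sub, map_sum]
    simp only [lmap_single, Prod.map_apply, map_pow, ha, one_pow]
    exact sub_mem (single_one_one_mem_almostBoundaries p)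
      (sum_mem fun _ _ => single_one_one_mem_almostBoundaries p)

lemma commutatorElement_mem_boundingSubgroup {a : G} (ha : a ∈ lowerP p G (n + 1)) (b : G)
    (h : ⁅a, b⁆ ∈ lowerP p G (n + 1)) :
    (⟨⁅a, b⁆, h⟩ : lowerP p G (n + 1)) ∈ boundingSubgroup p G n := by
  have ha' := (lowerPMk_eq_one_iff p).mpr ha
  -- Expand `[⁅a, b⁆]` with `∂[g|h] = [h] - [gh] + [g]` along the factorisations
  -- `⁅a, b⁆ = a · b a⁻¹ b⁻¹`, `b a⁻¹ b⁻¹ = b · a⁻¹ b⁻¹`, `a⁻¹ b⁻¹`, `b b⁻¹`, `a a⁻¹` and `1 · 1`.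
  refine ⟨single (a, a⁻¹) 1 + single (b, b⁻¹) 1 + single (1, 1) 1 + single (1, 1) 1
      - single (a, b * (a⁻¹ * b⁻¹)) 1 - single (b, a⁻¹ * b⁻¹) 1 - single (a⁻¹, b⁻¹) 1, ?_, ?_⟩
  · rw [lmap_single]
    simp only [map_add, map_sub, barD2_single, one_smul, commutatorElement_def, mul_assoc,
      mul_inv_cancel, mul_one]
    abel
  · simp only [map_add, map_sub, lmap_single, Prod.map_apply, map_mul, map_inv, ha', inv_one,
      one_mul, mul_inv_cancel]
    have h1 := single_one_one_mem_almostBoundaries p (G := G ⧸ lowerP p G (n + 1))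
    have h2 := single_one_mem_almostBoundaries p (lowerPMk p G (n + 1) b)⁻¹
    convert sub_mem (add_mem h1 h1) h2 using 1
    abel

lemma single_mem_boundingChains {ν : lowerP p G (n + 1)} (hν : ν.1 ∈ lowerP p G (n + 2)) :
    single ν 1 ∈ boundingChains p G n := by
  have hle : lowerP p G (n + 2) ≤ (boundingSubgroup p G n).map (lowerP p G (n + 1)).subtype := by
    rw [lowerP_add_two, Subgroup.closure_le]
    rintro x (⟨a, ha, rfl⟩ | ⟨a, ha, b, rfl⟩)
    · exact ⟨⟨a, ha⟩ ^ p, pow_mem_boundingSubgroup p ⟨a, ha⟩, rfl⟩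
    · exact ⟨_, commutatorElement_mem_boundingSubgroup p ha b
        (lowerP_succ_le p _ (commutatorElement_mem_lowerP_succ p ha b)), rfl⟩
  obtain ⟨μ, hμ, hμν⟩ := hle hν
  rwa [Subtype.ext hμν] at hμ

variable (G n)

noncomputable def layerEval : (lowerP p G (n + 1) →₀ ZMod p) →ₗ[ZMod p] Additive (layer p G n) :=
  Finsupp.lift _ (ZMod p) _ fun ν => Additive.ofMul (layerMk p G n ν)

variable {G n}

lemma exists_sub_single_mem_boundingChains (c : lowerP p G (n + 1) →₀ ZMod p) :
    ∃ ν, c - single ν 1 ∈ boundingChains p G n ∧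
      layerEval p G n c = Additive.ofMul (layerMk p G n ν) := by
  let S : AddSubgroup (lowerP p G (n + 1) →₀ ZMod p) :=
    { carrier := {c | ∃ ν, c - single ν 1 ∈ boundingChains p G n ∧
        layerEval p G n c = Additive.ofMul (layerMk p G n ν)}
      zero_mem' := ⟨1, by simpa using neg_mem (single_one_mem_boundingChains p), by simp⟩
      add_mem' := by
        rintro c₁ c₂ ⟨ν₁, h₁, e₁⟩ ⟨ν₂, h₂, e₂⟩
        refine ⟨ν₁ * ν₂, ?_, by rw [map_add, e₁, e₂, map_mul, ofMul_mul]⟩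
        convert add_mem (add_mem h₁ h₂)
          (single_add_single_sub_single_mul_mem_boundingChains p ν₁ ν₂) using 1
        abel
      neg_mem' := by
        rintro c ⟨ν, h, e⟩
        refine ⟨ν⁻¹, ?_, by rw [map_neg, e, map_inv, ofMul_inv]⟩
        have h₁ := single_add_single_sub_single_mul_mem_boundingChains p ν ν⁻¹
        rw [mul_inv_cancel] at h₁
        convert neg_mem (add_mem (add_mem h h₁) (single_one_mem_boundingChains p)) using 1
        abel }
  suffices c ∈ S from this
  induction c using Finsupp.induction_linear with
  | zero => exact zero_mem S
  | add c₁ c₂ h₁ h₂ => exact add_mem h₁ h₂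
  | single ν b =>
    obtain ⟨k, rfl⟩ := ZMod.intCast_surjective b
    rw [← smul_single_one, Int.cast_smul_eq_zsmul]
    exact zsmul_mem (show single ν 1 ∈ S from ⟨ν, by simp, by simp [layerEval]⟩) k

lemma mem_boundingChains_of_layerEval_eq_zero {c : lowerP p G (n + 1) →₀ ZMod p}
    (hc : layerEval p G n c = 0) : c ∈ boundingChains p G n := by
  obtain ⟨ν, hν, he⟩ := exists_sub_single_mem_boundingChains p c
  have hν₁ : layerMk p G n ν = 1 := Additive.ofMul.injective (he.symm.trans hc)
  have hν₂ : ν.1 ∈ lowerP p G (n + 2) :=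
    (lowerPMk_eq_one_iff p).mp (congrArg Subtype.val hν₁)
  simpa using add_mem hν (single_mem_boundingChains p hν₂)

variable (G n)

noncomputable def liftChain :
    ((G ⧸ lowerP p G (n + 1)) × (G ⧸ lowerP p G (n + 1)) →₀ ZMod p) →ₗ[ZMod p]
      ((G × G) →₀ ZMod p) :=
  Finsupp.lift _ (ZMod p) _ fun x =>
    single (x.1.out, x.2.out) 1 - single (sectionCocycle p G n x.1 x.2, (x.1 * x.2).out) 1

noncomputable def cocycleChain :
    ((G ⧸ lowerP p G (n + 1)) × (G ⧸ lowerP p G (n + 1)) →₀ ZMod p) →ₗ[ZMod p]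
      (lowerP p G (n + 1) →₀ ZMod p) :=
  Finsupp.lift _ (ZMod p) _ fun x => single ⟨_, sectionCocycle_mem p G n x.1 x.2⟩ 1

lemma liftChain_single (x : (G ⧸ lowerP p G (n + 1)) × (G ⧸ lowerP p G (n + 1))) (b : ZMod p) :
    liftChain p G n (single x b) = b • (single (x.1.out, x.2.out) 1 -
      single (sectionCocycle p G n x.1 x.2, (x.1 * x.2).out) 1) := by
  simp [liftChain, Finsupp.lift_apply, Finsupp.sum_single_index]

lemma cocycleChain_single (x : (G ⧸ lowerP p G (n + 1)) × (G ⧸ lowerP p G (n + 1))) (b : ZMod p) :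
    cocycleChain p G n (single x b) = b • single ⟨_, sectionCocycle_mem p G n x.1 x.2⟩ 1 := by
  simp [cocycleChain, Finsupp.lift_apply, Finsupp.sum_single_index]

lemma layerEval_comp_cocycleChain :
    (layerEval p G n).comp (cocycleChain p G n) = connectingChain p G n := by
  refine Finsupp.lhom_ext fun x b => ?_
  simp [layerEval, cocycleChain_single, connectingChain_single, layerCocycle]

lemma barD2_comp_liftChain :
    (barD2 p G).comp (liftChain p G n) =
      (Finsupp.lmapDomain (ZMod p) (ZMod p) (Quotient.out : G ⧸ lowerP p G (n + 1) → G)).comp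
          (barD2 p (G ⧸ lowerP p G (n + 1))) -
        (Finsupp.lmapDomain (ZMod p) (ZMod p) Subtype.val).comp (cocycleChain p G n) := by
  refine Finsupp.lhom_ext fun ⟨q, r⟩ b => ?_
  have hcocycle : sectionCocycle p G n q r * (q * r).out = q.out * r.out := by
    simp [sectionCocycle]
  simp only [LinearMap.coe_comp, LinearMap.sub_apply, Function.comp_apply, liftChain_single,
    cocycleChain_single, barD2_single, map_smul, map_sub, map_add, lmap_single, one_smul,
    hcocycle, smul_sub, smul_add]
  abel

lemma lmapDomain_liftChain_sub_mem
    (z : (G ⧸ lowerP p G (n + 1)) × (G ⧸ lowerP p G (n + 1)) →₀ ZMod p) :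
    Finsupp.lmapDomain (ZMod p) (ZMod p) (Prod.map (lowerPMk p G (n + 1)) (lowerPMk p G (n + 1)))
        (liftChain p G n z) - z ∈ almostBoundaries p (G ⧸ lowerP p G (n + 1)) := by
  induction z using Finsupp.induction_linear with
  | zero => simp
  | add z₁ z₂ h₁ h₂ =>
    convert add_mem h₁ h₂ using 1
    rw [map_add, map_add]
    abel
  | single x b =>
    have hc := (lowerPMk_eq_one_iff p).mpr (sectionCocycle_mem p G n x.1 x.2)
    convert neg_mem (Submodule.smul_mem _ b (single_one_mem_almostBoundaries p (x.1 * x.2)))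
      using 1
    simp only [liftChain_single, map_smul, map_sub, lmap_single, Prod.map_apply, hc]
    simp [smul_sub]

lemma exists_groupH2Map_eq_of_connecting_eq_zero {ξ : groupH2 p (G ⧸ lowerP p G (n + 1))}
    (hξ : connecting p G n ξ = 0) : ∃ η, groupH2Map p (lowerPMk p G (n + 1)) η = ξ := by
  obtain ⟨z, hz, rfl⟩ := groupH2.exists_mk_eq p ξ
  have hc : layerEval p G n (cocycleChain p G n z) = 0 := by
    rw [← LinearMap.comp_apply, layerEval_comp_cocycleChain, ← connecting_mk p G n z hz, hξ]
  obtain ⟨u, hu, hπu⟩ := mem_boundingChains_of_layerEval_eq_zero p hc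
  have hw : barD2 p G (liftChain p G n z + u) = 0 := by
    rw [map_add, ← LinearMap.comp_apply, barD2_comp_liftChain, LinearMap.sub_apply,
      LinearMap.comp_apply, hz, map_zero, zero_sub, hu, LinearMap.comp_apply, neg_add_cancel]
  refine ⟨groupH2.mk p _ hw, ?_⟩
  rw [groupH2Map_mk, groupH2.mk_eq_mk_iff]
  refine mem_range_barD3_of_mem_almostBoundaries p ?_ ?_
  · rw [map_add, add_sub_right_comm]
    exact add_mem (lmapDomain_liftChain_sub_mem p G n z) hπu
  · rw [map_sub, barD2_lmapDomain, hw, map_zero, hz, sub_zero]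

end Stallings

section Naturality

variable (p : ℕ) {A B : Type*} [Group A] [Group B] (φ : A →* B)

lemma lowerPQuotMap_lowerPMk (k : ℕ) (g : A) :
    lowerPQuotMap p φ k (lowerPMk p A k g) = lowerPMk p B k (φ g) :=
  rfl

lemma lowerPQuotMap_comp_lowerPMk (k : ℕ) :
    (lowerPQuotMap p φ k).comp (lowerPMk p A k) = (lowerPMk p B k).comp φ :=
  rfl

lemma lowerPQuotMap_bijective_of_le_one {n : ℕ} (hn : n ≤ 1) :
    Function.Bijective (lowerPQuotMap p φ n) := by
  have := subsingleton_quotient_lowerP p A hn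
  have := subsingleton_quotient_lowerP p B hn
  exact ⟨fun _ _ _ => Subsingleton.elim _ _, fun _ => ⟨1, Subsingleton.elim _ _⟩⟩

namespace Stallings

variable (n : ℕ)

noncomputable def layerMap : layer p A n →* layer p B n :=
  ((lowerPQuotMap p φ (n + 2)).comp (layer p A n).subtype).codRestrict (layer p B n) (by
    rintro ⟨_, ν, hν, rfl⟩
    exact ⟨φ ν, lowerP_map_le p φ (n + 1) (Subgroup.mem_map_of_mem φ hν), rfl⟩)

lemma coe_layerMap (x : layer p A n) :
    (layerMap p φ n x : B ⧸ lowerP p B (n + 2)) = lowerPQuotMap p φ (n + 2) x :=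
  rfl

noncomputable def layerLinearMap : Additive (layer p A n) →ₗ[ZMod p] Additive (layer p B n) :=
  (MonoidHom.toAdditive (layerMap p φ n)).toZModLinearMap p

noncomputable def sectionDiscrepancy (q : A ⧸ lowerP p A (n + 1)) : B :=
  (φ q.out)⁻¹ * (lowerPQuotMap p φ (n + 1) q).out

lemma sectionDiscrepancy_mem (q : A ⧸ lowerP p A (n + 1)) :
    sectionDiscrepancy p φ n q ∈ lowerP p B (n + 1) := by
  rw [← lowerPMk_eq_one_iff, sectionDiscrepancy, map_mul, map_inv, ← lowerPQuotMap_lowerPMk]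
  simp

noncomputable def layerDiscrepancy (q : A ⧸ lowerP p A (n + 1)) : layer p B n :=
  layerMk p B n ⟨_, sectionDiscrepancy_mem p φ n q⟩

lemma layerCocycle_lowerPQuotMap (q r : A ⧸ lowerP p A (n + 1)) :
    layerCocycle p B n (lowerPQuotMap p φ (n + 1) q) (lowerPQuotMap p φ (n + 1) r) =
      layerDiscrepancy p φ n q * (layerDiscrepancy p φ n r * (layerDiscrepancy p φ n (q * r))⁻¹) *
        layerMap p φ n (layerCocycle p A n q r) := by
  set d := sectionDiscrepancy p φ n
  have hcocycle : sectionCocycle p B n (lowerPQuotMap p φ (n + 1) q) (lowerPQuotMap p φ (n + 1) r) =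
      (φ q.out * d q * (φ q.out)⁻¹) *
        ((φ q.out * φ r.out) * (d r * (d (q * r))⁻¹) * (φ q.out * φ r.out)⁻¹) *
        φ (sectionCocycle p A n q r) := by
    simp only [d, sectionCocycle, sectionDiscrepancy, map_mul, map_inv]
    group
  apply Subtype.ext
  simp only [layerCocycle, layerDiscrepancy, Subgroup.coe_mul, Subgroup.coe_inv, coe_layerMk,
    coe_layerMap, lowerPQuotMap_lowerPMk]
  rw [hcocycle, map_mul, map_mul, lowerPMk_conj p (sectionDiscrepancy_mem p φ n q),
    lowerPMk_conj p (mul_mem (sectionDiscrepancy_mem p φ n r)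
      (inv_mem (sectionDiscrepancy_mem p φ n _))), map_mul, map_inv]

noncomputable def discrepancyChain : (A ⧸ lowerP p A (n + 1) →₀ ZMod p) →ₗ[ZMod p]
    Additive (layer p B n) :=
  Finsupp.lift _ (ZMod p) _ fun q => Additive.ofMul (layerDiscrepancy p φ n q)

lemma discrepancyChain_single (q : A ⧸ lowerP p A (n + 1)) (b : ZMod p) :
    discrepancyChain p φ n (single q b) = b • Additive.ofMul (layerDiscrepancy p φ n q) := by
  simp [discrepancyChain, Finsupp.lift_apply, Finsupp.sum_single_index]

lemma connectingChain_comp_lmapDomain_lowerPQuotMap :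
    (connectingChain p B n).comp (Finsupp.lmapDomain (ZMod p) (ZMod p)
        (Prod.map (lowerPQuotMap p φ (n + 1)) (lowerPQuotMap p φ (n + 1)))) =
      (layerLinearMap p φ n).comp (connectingChain p A n) +
        (discrepancyChain p φ n).comp (barD2 p (A ⧸ lowerP p A (n + 1))) := by
  refine Finsupp.lhom_ext fun ⟨q, r⟩ b => ?_
  simp only [LinearMap.coe_comp, LinearMap.add_apply, Function.comp_apply, lmap_single,
    Prod.map_apply, connectingChain_single, barD2_single, map_smul, map_add, map_sub,
    discrepancyChain_single, one_smul, layerCocycle_lowerPQuotMap, ← smul_add]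
  congr 1
  simp only [ofMul_mul, ofMul_inv, layerLinearMap, AddMonoidHom.coe_toZModLinearMap,
    MonoidHom.toAdditive_apply_apply, toMul_ofMul]
  abel

lemma connecting_groupH2Map_lowerPQuotMap (ξ : groupH2 p (A ⧸ lowerP p A (n + 1))) :
    connecting p B n (groupH2Map p (lowerPQuotMap p φ (n + 1)) ξ) =
      layerLinearMap p φ n (connecting p A n ξ) := by
  obtain ⟨z, hz, rfl⟩ := groupH2.exists_mk_eq p ξ
  rw [groupH2Map_mk, connecting_mk, connecting_mk, ← LinearMap.comp_apply,
    connectingChain_comp_lmapDomain_lowerPQuotMap, LinearMap.add_apply, LinearMap.comp_apply,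
    LinearMap.comp_apply, hz, map_zero, add_zero]

end Stallings

end Naturality

section GroupH1

variable (p : ℕ) {G : Type*} [Group G]

lemma lowerP_two_le_ker {M : Type*} [CommGroup M] (f : G →* M) (hf : ∀ m : M, m ^ p = 1) :
    lowerP p G 2 ≤ f.ker := by
  rw [lowerP_add_two, Subgroup.closure_le]
  rintro x (⟨a, -, rfl⟩ | ⟨a, -, b, rfl⟩)
  · exact (f.mem_ker).mpr (by rw [map_pow, hf])
  · exact (f.mem_ker).mpr (by rw [map_commutatorElement, commutatorElement_eq_one_iff_mul_comm,
      mul_comm])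

variable (G)

noncomputable def quotChain : (G →₀ ZMod p) →ₗ[ZMod p] Additive (G ⧸ lowerP p G 2) :=
  Finsupp.lift _ (ZMod p) _ fun g => Additive.ofMul (lowerPMk p G 2 g)

lemma quotChain_single (g : G) (b : ZMod p) :
    quotChain p G (single g b) = b • Additive.ofMul (lowerPMk p G 2 g) := by
  simp [quotChain, Finsupp.lift_apply, Finsupp.sum_single_index]

noncomputable def groupH1ToQuot : groupH1 p G →ₗ[ZMod p] Additive (G ⧸ lowerP p G 2) :=
  Submodule.liftQ _ (quotChain p G) (by
    refine LinearMap.range_le_ker_iff.mpr (Finsupp.lhom_ext fun ⟨g, h⟩ b => ?_)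
    simp only [LinearMap.comp_apply, barD2_single, map_smul, map_add, map_sub, quotChain_single,
      one_smul, map_mul, ofMul_mul, LinearMap.zero_apply]
    rw [← smul_zero b]
    congr 1
    abel)

lemma groupH1ToQuot_mk_single (g : G) (b : ZMod p) :
    groupH1ToQuot p G (Submodule.Quotient.mk (single g b)) =
      b • Additive.ofMul (lowerPMk p G 2 g) :=
  quotChain_single p G g b

noncomputable def quotToGroupH1 : Additive (G ⧸ lowerP p G 2) →ₗ[ZMod p] groupH1 p G :=
  AddMonoidHom.toZModLinearMap p <| MonoidHom.toAdditiveLeft <|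
    QuotientGroup.lift (lowerP p G 2)
      { toFun g := Multiplicative.ofAdd (Submodule.mkQ _ (single g 1))
        map_one' := by
          rw [← ofAdd_zero, ← (Submodule.mkQ _).map_zero]
          refine congrArg _ ((Submodule.Quotient.eq _).mpr ⟨single (1, 1) 1, ?_⟩)
          simp [barD2_single]
        map_mul' a b := by
          rw [← ofAdd_add, ← map_add]
          refine congrArg _ ((Submodule.Quotient.eq _).mpr ⟨-single (a, b) 1, ?_⟩)
          rw [map_neg, barD2_single, one_smul]
          abel }
      (lowerP_two_le_ker p _ fun m => by
        rw [← ofAdd_toAdd m, ← ofAdd_nsmul, ZModModule.char_nsmul_eq_zero, ofAdd_zero])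

lemma quotToGroupH1_ofMul_mk (g : G) :
    quotToGroupH1 p G (Additive.ofMul (lowerPMk p G 2 g)) = Submodule.Quotient.mk (single g 1) :=
  rfl

noncomputable def groupH1Equiv : groupH1 p G ≃ₗ[ZMod p] Additive (G ⧸ lowerP p G 2) :=
  LinearEquiv.ofLinearMap (groupH1ToQuot p G) (quotToGroupH1 p G)
    (by
      ext x
      obtain ⟨g, hg⟩ := QuotientGroup.mk_surjective (Additive.toMul x)
      rw [← ofMul_toMul x, ← hg]
      exact (groupH1ToQuot_mk_single p G g 1).trans (one_smul _ _))
    (by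
      ext g
      simp only [LinearMap.coe_comp, Function.comp_apply, Finsupp.lsingle_apply,
        Submodule.mkQ_apply, groupH1ToQuot_mk_single, one_smul, quotToGroupH1_ofMul_mk,
        LinearMap.id_apply])

lemma groupH1Equiv_mk_single (g : G) :
    groupH1Equiv p G (Submodule.Quotient.mk (single g 1)) = Additive.ofMul (lowerPMk p G 2 g) :=
  (groupH1ToQuot_mk_single p G g 1).trans (one_smul _ _)

variable {G}

lemma groupH1Equiv_groupH1Map {H : Type*} [Group H] (φ : G →* H) (ξ : groupH1 p G) :
    groupH1Equiv p H (groupH1Map p φ ξ) =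
      Additive.ofMul (lowerPQuotMap p φ 2 (Additive.toMul (groupH1Equiv p G ξ))) := by
  have h : (groupH1Equiv p H).toLinearMap ∘ₗ groupH1Map p φ =
      (MonoidHom.toAdditive (lowerPQuotMap p φ 2)).toZModLinearMap p ∘ₗ
        (groupH1Equiv p G).toLinearMap := by
    ext g
    simp only [groupH1Map, LinearMap.coe_comp, LinearEquiv.coe_coe, Function.comp_apply,
      Finsupp.lsingle_apply, Submodule.mkQ_apply, Submodule.mapQ_apply, lmap_single,
      groupH1Equiv_mk_single, AddMonoidHom.coe_toZModLinearMap, MonoidHom.coe_toAdditive]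
    exact congrArg Additive.ofMul (lowerPQuotMap_lowerPMk p φ 2 g).symm
  exact LinearMap.congr_fun h ξ

lemma lowerPQuotMap_two_bijective {H : Type*} [Group H] {φ : G →* H}
    (h1 : Function.Bijective (groupH1Map p φ)) : Function.Bijective (lowerPQuotMap p φ 2) := by
  have h : ⇑(lowerPQuotMap p φ 2) = Additive.toMul ∘ groupH1Equiv p H ∘ groupH1Map p φ ∘
      (groupH1Equiv p G).symm ∘ Additive.ofMul := by
    funext x
    simp [groupH1Equiv_groupH1Map]
  rw [h]
  exact Additive.toMul.bijective.comp ((groupH1Equiv p H).bijective.comp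
    (h1.comp ((groupH1Equiv p G).symm.bijective.comp Additive.ofMul.bijective)))

end GroupH1

lemma groupH2Map_lowerPMk_eq_zero_of_le (p : ℕ) {G : Type*} [Group G] {k m : ℕ} (hkm : k ≤ m)
    {x : groupH2 p G} (hx : groupH2Map p (QuotientGroup.mk' (lowerP p G m)) x = 0) :
    groupH2Map p (lowerPMk p G k) x = 0 := by
  have h : lowerPMk p G k =
      (QuotientGroup.lift (lowerP p G m) (lowerPMk p G k)
        (by rw [QuotientGroup.ker_mk']; exact lowerP_antitone p hkm)).comp
        (QuotientGroup.mk' (lowerP p G m)) :=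
    rfl
  rw [h, groupH2Map_comp, hx, map_zero]

namespace Stallings

variable (p : ℕ) {A B : Type*} [Group A] [Group B] {φ : A →* B}

lemma layerMap_surjective (n : ℕ) (hφ : Function.Bijective (lowerPQuotMap p φ (n + 2))) :
    Function.Surjective (layerMap p φ (n + 1)) := by
  intro y
  obtain ⟨ξB, hξB⟩ := connecting_surjective p n (Additive.ofMul y)
  obtain ⟨ξA, rfl⟩ := (groupH2Map_bijective p hφ).2 ξB
  refine ⟨Additive.toMul (connecting p A (n + 1) ξA), ?_⟩
  rw [← toMul_ofMul y, ← hξB, connecting_groupH2Map_lowerPQuotMap]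
  rfl

lemma layerMap_injective (n : ℕ) (hφ : Function.Bijective (lowerPQuotMap p φ (n + 2)))
    (hH2 : ∀ y : groupH2 p B, ∃ x : groupH2 p A,
      groupH2Map p (lowerPMk p B (n + 2)) (groupH2Map p φ x) =
        groupH2Map p (lowerPMk p B (n + 2)) y) :
    Function.Injective (layerMap p φ (n + 1)) := by
  rw [injective_iff_map_eq_one]
  intro x hx
  obtain ⟨ξ, hξ⟩ := connecting_surjective p n (Additive.ofMul x)
  have hξB : connecting p B (n + 1) (groupH2Map p (lowerPQuotMap p φ (n + 2)) ξ) = 0 := by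
    rw [connecting_groupH2Map_lowerPQuotMap, hξ]
    exact congrArg Additive.ofMul hx
  obtain ⟨y, hy⟩ := exists_groupH2Map_eq_of_connecting_eq_zero p B (n + 1) hξB
  obtain ⟨x', hx'⟩ := hH2 y
  have hξA : groupH2Map p (lowerPMk p A (n + 2)) x' = ξ := by
    refine (groupH2Map_bijective p hφ).1 ?_
    rw [← groupH2Map_comp, lowerPQuotMap_comp_lowerPMk, groupH2Map_comp, hx', hy]
  rw [← hξA, connecting_groupH2Map_lowerPMk] at hξ
  exact Additive.ofMul.injective hξ.symm

/-- The five lemma for `1 → G_{p,n+1}/G_{p,n+2} → G/G_{p,n+2} → G/G_{p,n+1} → 1`. -/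
lemma lowerPQuotMap_succ_bijective (n : ℕ) (hφ : Function.Bijective (lowerPQuotMap p φ (n + 1)))
    (hlayer : Function.Bijective (layerMap p φ n)) :
    Function.Bijective (lowerPQuotMap p φ (n + 2)) := by
  constructor
  · rw [injective_iff_map_eq_one]
    intro x hx
    obtain ⟨a, rfl⟩ := QuotientGroup.mk'_surjective _ x
    rw [lowerPQuotMap_lowerPMk, lowerPMk_eq_one_iff] at hx
    have ha : a ∈ lowerP p A (n + 1) := by
      rw [← lowerPMk_eq_one_iff]
      refine (injective_iff_map_eq_one _).mp hφ.1 _ ?_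
      rw [lowerPQuotMap_lowerPMk, lowerPMk_eq_one_iff]
      exact lowerP_succ_le p _ hx
    have h1 : layerMap p φ n (layerMk p A n ⟨a, ha⟩) = 1 :=
      Subtype.ext ((lowerPMk_eq_one_iff p).mpr hx)
    exact congrArg Subtype.val ((injective_iff_map_eq_one _).mp hlayer.1 _ h1)
  · intro y
    obtain ⟨b, rfl⟩ := QuotientGroup.mk'_surjective _ y
    obtain ⟨q, hq⟩ := hφ.2 (lowerPMk p B (n + 1) b)
    obtain ⟨a, rfl⟩ := QuotientGroup.mk'_surjective _ q
    have hab : (φ a)⁻¹ * b ∈ lowerP p B (n + 1) := QuotientGroup.eq.mp hq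
    obtain ⟨⟨_, a', ha', rfl⟩, ha'b⟩ := hlayer.2 (layerMk p B n ⟨_, hab⟩)
    refine ⟨lowerPMk p A (n + 2) (a * a'), ?_⟩
    have h := congrArg Subtype.val ha'b
    simp only [coe_layerMap, coe_layerMk, lowerPQuotMap_lowerPMk] at h
    rw [lowerPQuotMap_lowerPMk, map_mul, map_mul, h, ← map_mul, mul_inv_cancel_left]

end Stallings

theorem lowerP_quot_iso_of_dwyer_hyp_general (p : ℕ)
    {A B : Type*} [Group A] [Group B] (φ : A →* B) (m : ℕ)
    (h1 : Function.Bijective (groupH1Map p φ))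
    (h2 : ∀ y : groupH2 p B, ∃ x : groupH2 p A,
      groupH2Map p φ x - y ∈
        LinearMap.ker (groupH2Map p (QuotientGroup.mk' (lowerP p B m)))) :
    ∀ n ≤ m + 1, Function.Bijective (lowerPQuotMap p φ n) := by
  intro n hn
  induction n with
  | zero => exact lowerPQuotMap_bijective_of_le_one p φ zero_le_one
  | succ k ih =>
    rcases k with _ | _ | n
    · exact lowerPQuotMap_bijective_of_le_one p φ le_rfl
    · exact lowerPQuotMap_two_bijective p h1
    · have hH2 : ∀ y : groupH2 p B, ∃ x : groupH2 p A,
          groupH2Map p (lowerPMk p B (n + 2)) (groupH2Map p φ x) =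
            groupH2Map p (lowerPMk p B (n + 2)) y := fun y => by
        obtain ⟨x, hx⟩ := h2 y
        refine ⟨x, sub_eq_zero.mp ?_⟩
        rw [← map_sub]
        exact groupH2Map_lowerPMk_eq_zero_of_le p (by omega) hx
      have hφ := ih (by omega)
      exact Stallings.lowerPQuotMap_succ_bijective p (n + 1) hφ
        ⟨Stallings.layerMap_injective p n hφ hH2, Stallings.layerMap_surjective p n hφ⟩

/-- Dwyer's theorem for the p-lower central series: if `φ : A → B`
induces an isomorphism on `H_1(−; ℤ/p)` and the composition
`H_2(A; ℤ/p) → H_2(B; ℤ/p) → H_2(B; ℤ/p)/Φ_{p,m}(B)` is surjective, where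
`Φ_{p,m}(B) = ker(H_2(B; ℤ/p) → H_2(B/B_{p,m}; ℤ/p))`, then for every `n ≤ m+1`,
`φ` induces an isomorphism `A/A_{p,n} → B/B_{p,n}`. -/
theorem lowerP_quot_iso_of_dwyer_hyp (p : ℕ) (hp : p.Prime)
    {A B : Type*} [Group A] [Group B] (φ : A →* B) (m : ℕ) (hm : 1 ≤ m)
    (h1 : Function.Bijective (groupH1Map p φ))
    (h2 : ∀ y : groupH2 p B, ∃ x : groupH2 p A,
      groupH2Map p φ x - y ∈
        LinearMap.ker (groupH2Map p (QuotientGroup.mk' (lowerP p B m)))) :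
    ∀ n ≤ m + 1, Function.Bijective (lowerPQuotMap p φ n) :=
  lowerP_quot_iso_of_dwyer_hyp_general p φ m h1 h2
end
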